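/- arXiv:1906.04636 — 11 statements merged into one kernel-verified Lean document; each statement's English description precedes it below -/
import Mathlib

section
/- For every integer n ≥ 3, the determinant of the distance matrix D(T_n) of the graph T_n equals (-1)^{n-1} · 2^{n-2}. -/
/-!
`D(T_n)` is the distance matrix of the complete split graph with clique `{1, 2}` and independent
set `S = {3, …, n}`. Adding `d = 1` on the clique and `d = 2` on `S` along the diagonal gives the
rank-two matrix `𝟙𝟙ᵀ + 𝟙_S 𝟙_Sᵀ`, so the matrix determinant lemma turns `det D` into
`∏ (-dᵢ) = (-1)^m (-2)^k` times a `2 × 2` determinant equal to `(m - 2)(k - 2)/2 - 1`, where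
`m` is the size of the clique and `k = |S|`. For `m = 2` that factor is `-1`.
-/

open Matrix Finset

theorem det_diagonal_add_mul {ι κ K : Type*} [Fintype ι] [DecidableEq ι] [Fintype κ]
    [DecidableEq κ] [Field K] {d : ι → K} (hd : ∀ i, d i ≠ 0) (U : Matrix ι κ K)
    (V : Matrix κ ι K) :
    (diagonal d + U * V).det = (∏ i, d i) * (1 + V * diagonal d⁻¹ * U).det := by
  have hinv : (diagonal d)⁻¹ = diagonal d⁻¹ := inv_eq_left_inv (by simp [hd])
  rw [det_add_mul U V (by simpa [prod_ne_zero_iff] using hd), det_diagonal, hinv]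

theorem transpose_mul_diagonal_mul_apply {ι κ R : Type*} [Fintype ι] [DecidableEq ι]
    [Semiring R] (w : ι → R) (U : Matrix ι κ R) (a b : κ) :
    (Uᵀ * diagonal w * U) a b = ∑ i, U i a * w i * U i b := by
  rw [mul_apply]
  simp only [mul_diagonal, transpose_apply]

theorem sum_ite_eq_card_mul_add_card_mul {ι R : Type*} [Fintype ι] [NonAssocSemiring R]
    (p : ι → Prop) [DecidablePred p] (a b : R) :
    ∑ i, (if p i then a else b) = #{i | p i} * a + #{i | ¬p i} * b := by
  simp [sum_ite, sum_const, nsmul_eq_mul]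

namespace CompleteSplitGraph

variable {ι : Type*} (p : ι → Prop) [DecidablePred p]

/-- The distance matrix of the complete split graph on `ι` with independent set `{i | p i}` and
clique `{i | ¬p i}`. -/
def distMatrix [DecidableEq ι] : Matrix ι ι ℝ :=
  of fun i j => if i = j then 0 else if p i ∧ p j then 2 else 1

def diagonalPart (i : ι) : ℝ := if p i then -2 else -1

def lowRankFactor : Matrix ι (Fin 2) ℝ := of fun i => ![1, if p i then 1 else 0]

theorem distMatrix_eq [DecidableEq ι] :
    distMatrix p = diagonal (diagonalPart p) + lowRankFactor p * (lowRankFactor p)ᵀ := by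
  ext i j
  simp only [distMatrix, diagonalPart, lowRankFactor, of_apply, Matrix.add_apply,
    diagonal_apply, mul_apply, transpose_apply, Fin.sum_univ_two]
  split_ifs <;> simp_all <;> norm_num

variable [Fintype ι]

theorem one_add_transpose_mul_diagonal_inv_mul [DecidableEq ι] :
    1 + (lowRankFactor p)ᵀ * diagonal (diagonalPart p)⁻¹ * lowRankFactor p =
      !![1 - (#{i | ¬p i} : ℝ) - #{i | p i} / 2, -(#{i | p i} / 2);
         -(#{i | p i} / 2), 1 - (#{i | p i} : ℝ) / 2] := by
  ext a b
  fin_cases a <;> fin_cases b <;>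
    simp +contextual [transpose_mul_diagonal_mul_apply, diagonalPart, lowRankFactor, apply_ite,
      sum_ite_eq_card_mul_add_card_mul] <;> ring

theorem det_distMatrix [DecidableEq ι] :
    (distMatrix p).det = (-1) ^ #{i | ¬p i} * (-2) ^ #{i | p i} *
      (((#{i | ¬p i} : ℝ) - 2) * ((#{i | p i} : ℝ) - 2) / 2 - 1) := by
  have hd : ∀ i, diagonalPart p i ≠ 0 := fun i => by
    unfold diagonalPart; split_ifs <;> norm_num
  rw [distMatrix_eq, det_diagonal_add_mul hd, one_add_transpose_mul_diagonal_inv_mul,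
    det_fin_two_of]
  simp only [diagonalPart, prod_ite, prod_const]
  ring

end CompleteSplitGraph

/-- For every integer `n ≥ 3`, the determinant of the distance matrix `D(T_n)` of the
graph `T_n` equals `(-1)^(n-1) * 2^(n-2)`. Vertices are `Fin n` (0-based); the base
vertices are those with index `< 2`. -/
theorem det_distanceMatrix_Tn (n : ℕ) (hn : 3 ≤ n)
    (D : Matrix (Fin n) (Fin n) ℝ)
    (hD : ∀ i j : Fin n, D i j =
      if i = j then 0 else if 2 ≤ i.val ∧ 2 ≤ j.val then 2 else 1) :
    D.det = (-1) ^ (n - 1) * 2 ^ (n - 2) := by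
  have hsplit : D = CompleteSplitGraph.distMatrix (fun i : Fin n => 2 ≤ i.val) := ext hD
  have hclique : #{i : Fin n | ¬2 ≤ i.val} = 2 := by
    simp only [not_le, Fin.card_filter_val_lt]
    omega
  have hindep : #{i : Fin n | 2 ≤ i.val} = n - 2 := by
    have := card_filter_add_card_filter_not (s := univ) (fun i : Fin n => 2 ≤ i.val)
    rw [card_univ, Fintype.card_fin, hclique] at this
    omega
  rw [hsplit, CompleteSplitGraph.det_distMatrix, hclique, hindep]
  obtain ⟨k, rfl⟩ : ∃ k, n = k + 2 := ⟨n - 2, by omega⟩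
  rw [Nat.add_sub_cancel, show k + 2 - 1 = k + 1 by omega, neg_pow (2 : ℝ)]
  ring
end

section
/- For every integer n ≥ 3, the distance matrix D(T_n) is invertible, and its inverse M is the real n×n matrix with entries: M_{11} = M_{22} = -(n-2)/2; M_{12} = M_{21} = 1 - (n-2)/2; M_{ij} = 1/2 whenever exactly one of i, j lies in {1,2}; M_{ii} = -1/2 for every i in {3,...,n}; and M_{ij} = 0 for all distinct i, j in {3,...,n}. -/
/-!
List the two base vertices first and the `m = n - 2` others after them. In this block form
`D` and `M` are combinations of all-ones blocks `J` and identity blocks, and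
`J_{ab} * J_{bc} = b • J_{ac}` turns `D * M = 1` into four scalar identities in `m`.
-/

open Matrix

namespace Matrix

variable {l n p K : Type*}

theorem of_one_mul_of_one [Fintype n] [NonAssocSemiring K] :
    (of fun _ _ => 1 : Matrix l n K) * (of fun _ _ => 1 : Matrix n p K) =
      (Fintype.card n : K) • of fun _ _ => 1 := by
  ext i k
  simp [mul_apply]

end Matrix

namespace Tn

variable (β γ K : Type*) [Fintype γ] [DecidableEq β] [DecidableEq γ]

def distanceBlocks [Ring K] : Matrix (β ⊕ γ) (β ⊕ γ) K :=
  fromBlocks ((of fun _ _ => 1) - 1) (of fun _ _ => 1) (of fun _ _ => 1)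
    ((2 : K) • ((of fun _ _ => 1) - 1))

def inverseBlocks [Field K] : Matrix (β ⊕ γ) (β ⊕ γ) K :=
  fromBlocks ((1 - (Fintype.card γ : K) / 2) • (of fun _ _ => 1) - 1)
    ((1 / 2 : K) • of fun _ _ => 1) ((1 / 2 : K) • of fun _ _ => 1) (-(1 / 2 : K) • 1)

theorem distanceBlocks_mul_inverseBlocks [Fintype β] [Field K] [CharZero K]
    (hβ : Fintype.card β = 2) : distanceBlocks β γ K * inverseBlocks β γ K = 1 := by
  rw [distanceBlocks, inverseBlocks, fromBlocks_multiply, ← fromBlocks_one]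
  simp only [Matrix.sub_mul, Matrix.mul_sub, Matrix.smul_mul, Matrix.mul_smul,
    of_one_mul_of_one, Matrix.one_mul, Matrix.mul_one, Nat.cast_ofNat, hβ]
  congr 1 <;> module

variable {β γ K}

theorem submatrix_finSumFinEquiv_eq_distanceBlocks {m : ℕ} [Ring K]
    {D : Matrix (Fin (2 + m)) (Fin (2 + m)) K}
    (hD : ∀ i j : Fin (2 + m), D i j =
      if i = j then 0 else if 2 ≤ i.val ∧ 2 ≤ j.val then 2 else 1) :
    D.submatrix finSumFinEquiv finSumFinEquiv = distanceBlocks (Fin 2) (Fin m) K := by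
  ext (i | i) (j | j) <;> simp [distanceBlocks, hD, one_apply, Fin.ext_iff]
    <;> split_ifs <;> first | omega | norm_num

theorem submatrix_finSumFinEquiv_eq_inverseBlocks {m : ℕ} [Field K]
    {M : Matrix (Fin (2 + m)) (Fin (2 + m)) K}
    (hM : ∀ i j : Fin (2 + m), M i j =
      if i.val < 2 ∧ j.val < 2 then
        (if i = j then -(((2 + m : ℕ) : K) - 2) / 2 else 1 - (((2 + m : ℕ) : K) - 2) / 2)
      else if i.val < 2 ∨ j.val < 2 then 1 / 2
      else if i = j then -(1 / 2) else 0) :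
    M.submatrix finSumFinEquiv finSumFinEquiv = inverseBlocks (Fin 2) (Fin m) K := by
  ext (i | i) (j | j) <;> simp [inverseBlocks, hM, one_apply, Fin.ext_iff]
    <;> split_ifs <;> first | omega | ring

end Tn

/-- For every integer `n ≥ 3`, the distance matrix `D(T_n)` is invertible and its
inverse is the explicitly given matrix `M`. Vertices are `Fin n` (0-based); the base
vertices are those with index `< 2`. -/
theorem inv_distanceMatrix_Tn (n : ℕ) (hn : 3 ≤ n)
    (D M : Matrix (Fin n) (Fin n) ℝ)
    (hD : ∀ i j : Fin n, D i j =
      if i = j then 0 else if 2 ≤ i.val ∧ 2 ≤ j.val then 2 else 1)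
    (hM : ∀ i j : Fin n, M i j =
      if i.val < 2 ∧ j.val < 2 then
        (if i = j then -((n : ℝ) - 2) / 2 else 1 - ((n : ℝ) - 2) / 2)
      else if i.val < 2 ∨ j.val < 2 then 1 / 2
      else if i = j then -(1 / 2) else 0) :
    IsUnit D ∧ D⁻¹ = M := by
  obtain ⟨m, rfl⟩ : ∃ m, n = 2 + m := ⟨n - 2, by omega⟩
  have hDM : D * M = 1 := by
    have hblocks := Tn.distanceBlocks_mul_inverseBlocks (Fin 2) (Fin m) ℝ (Fintype.card_fin 2)
    rw [← Tn.submatrix_finSumFinEquiv_eq_distanceBlocks hD,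
      ← Tn.submatrix_finSumFinEquiv_eq_inverseBlocks hM, submatrix_mul_equiv] at hblocks
    simpa using congrArg (·.submatrix finSumFinEquiv.symm finSumFinEquiv.symm) hblocks
  exact ⟨(isUnit_iff_isUnit_det D).mpr (isUnit_det_of_right_inverse hDM), inv_eq_right_inv hDM⟩
end

section
/- For every integer n ≥ 3, the inverse of the distance matrix D(T_n) satisfies D(T_n)^{-1} = -(1/2)·L(T_n) + (1/2)·J_n + (1/2)·R(T_n), where J_n is the n×n matrix of all ones. -/
open Finset in
lemma sum_base' (n : ℕ) (hn : 3 ≤ n) (a b : ℝ) :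
    ∑ k : Fin n, (if (k : ℕ) < 2 then a else b) = 2 * a + ((n : ℝ) - 2) * b := by
  have h0 : (0 : ℕ) < n := by omega
  have h1 : (1 : ℕ) < n := by omega
  have hset : (univ.filter fun k : Fin n => (k : ℕ) < 2) = {⟨0, h0⟩, ⟨1, h1⟩} := by
    ext k; simp [Fin.ext_iff]; omega
  have hcard : (univ.filter fun k : Fin n => (k : ℕ) < 2).card = 2 := by
    rw [hset]; simp
  have hcard' : (univ.filter fun k : Fin n => ¬ (k : ℕ) < 2).card = n - 2 := by
    have := Finset.card_filter_add_card_filter_not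
      (s := (univ : Finset (Fin n))) (p := fun k : Fin n => (k : ℕ) < 2)
    simp only [Finset.card_univ, Fintype.card_fin] at this
    omega
  rw [Finset.sum_ite, Finset.sum_const, Finset.sum_const, hcard, hcard',
    nsmul_eq_mul, nsmul_eq_mul, Nat.cast_sub (by omega : 2 ≤ n)]
  norm_num

lemma sum_two' (n : ℕ) (hn : 3 ≤ n) (f : Fin n → ℝ) (i j : Fin n) (a b ci cj : ℝ)
    (hf : ∀ k, f k = (if (k : ℕ) < 2 then a else b)
      + (if k = i then ci else 0) + (if k = j then cj else 0)) :
    ∑ k, f k = 2 * a + ((n : ℝ) - 2) * b + ci + cj := by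
  simp_rw [hf]
  rw [Finset.sum_add_distrib, Finset.sum_add_distrib, sum_base' n hn,
    Finset.sum_ite_eq' Finset.univ i, Finset.sum_ite_eq' Finset.univ j]
  simp

lemma sum_one' (n : ℕ) (hn : 3 ≤ n) (f : Fin n → ℝ) (i : Fin n) (a b ci : ℝ)
    (hf : ∀ k, f k = (if (k : ℕ) < 2 then a else b) + (if k = i then ci else 0)) :
    ∑ k, f k = 2 * a + ((n : ℝ) - 2) * b + ci := by
  simp_rw [hf]
  rw [Finset.sum_add_distrib, sum_base' n hn, Finset.sum_ite_eq' Finset.univ i]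
  simp

/-- For every integer `n ≥ 3`,
`D(T_n)⁻¹ = -(1/2)·L(T_n) + (1/2)·J_n + (1/2)·R(T_n)`.
Vertices are `Fin n` (0-based); the base vertices are those with index `< 2`. -/
theorem inv_distanceMatrix_Tn_laplacian (n : ℕ) (hn : 3 ≤ n)
    (D L R J : Matrix (Fin n) (Fin n) ℝ)
    (hD : ∀ i j : Fin n, D i j =
      if i = j then 0 else if 2 ≤ i.val ∧ 2 ≤ j.val then 2 else 1)
    (hL : ∀ i j : Fin n, L i j =
      if i = j then (if i.val < 2 then (n : ℝ) - 1 else 2)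
      else if i.val < 2 ∨ j.val < 2 then -1 else 0)
    (hR : ∀ i j : Fin n, R i j =
      if i = j then 0
      else if i.val < 2 ∧ j.val < 2 then -((n : ℝ) - 2) else -1)
    (hJ : ∀ i j : Fin n, J i j = 1) :
    D⁻¹ = (-(1 / 2) : ℝ) • L + ((1 / 2) : ℝ) • J + ((1 / 2) : ℝ) • R := by
  set M : Matrix (Fin n) (Fin n) ℝ :=
    (-(1 / 2) : ℝ) • L + ((1 / 2) : ℝ) • J + ((1 / 2) : ℝ) • R with hM
  have hMe : ∀ k l : Fin n, M k l =
      if k = l then (if (k : ℕ) < 2 then (2 - (n : ℝ)) / 2 else -(1 / 2))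
      else if (k : ℕ) < 2 ∧ (l : ℕ) < 2 then (4 - (n : ℝ)) / 2
      else if (k : ℕ) < 2 ∨ (l : ℕ) < 2 then 1 / 2 else 0 := by
    intro k l
    simp only [hM, Matrix.add_apply, Matrix.smul_apply, hL k l, hR k l, hJ k l,
      smul_eq_mul]
    split_ifs <;> first | ring1 | (exfalso; omega)
  apply Matrix.inv_eq_right_inv
  ext i j
  rw [Matrix.mul_apply, Matrix.one_apply]
  rcases eq_or_ne i j with rfl | hij
  · rw [if_pos rfl]
    by_cases hi : (i : ℕ) < 2
    · rw [sum_one' n hn _ i ((4 - (n : ℝ)) / 2) (1 / 2) (-((4 - (n : ℝ)) / 2))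
        (fun k => ?_)]
      · ring
      · rw [hD, hMe]
        split_ifs <;> first | ring1 | (exfalso; omega)
    · rw [sum_one' n hn _ i (1 / 2) 0 0 (fun k => ?_)]
      · ring
      · rw [hD, hMe]
        split_ifs <;> first | ring1 | (exfalso; omega)
  · rw [if_neg hij]
    by_cases hi : (i : ℕ) < 2 <;> by_cases hj : (j : ℕ) < 2
    · rw [sum_two' n hn _ i j ((4 - (n : ℝ)) / 2) (1 / 2) (-((4 - (n : ℝ)) / 2)) (-1)
        (fun k => ?_)]
      · ring
      · rw [hD, hMe]
        split_ifs <;> first | ring1 | (exfalso; omega)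
    · rw [sum_two' n hn _ i j (1 / 2) 0 (-(1 / 2)) (-(1 / 2)) (fun k => ?_)]
      · ring
      · rw [hD, hMe]
        split_ifs <;> first | ring1 | (exfalso; omega)
    · rw [sum_two' n hn _ i j ((4 - (n : ℝ)) / 2) 1 (-1) (-1) (fun k => ?_)]
      · ring
      · rw [hD, hMe]
        split_ifs <;> first | ring1 | (exfalso; omega)
    · rw [sum_two' n hn _ i j (1 / 2) 0 0 (-1) (fun k => ?_)]
      · ring
      · rw [hD, hMe]
        split_ifs <;> first | ring1 | (exfalso; omega)
end

section
/- For all integers m, n ≥ 1, the determinant of the distance matrix D(K_{m,n}) of the complete bipartite graph K_{m,n} equals (-2)^{m+n-2} · (4(m-1)(n-1) - mn). -/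
/-!
Writing `P` for the `(m + n) × 2` incidence matrix of the two parts and `C = !![2, 1; 1, 2]`,
the distance matrix is `-2 • 1 + P * C * Pᵀ`. The Weinstein–Aronszajn identity moves the rank-two perturbation
to the other side, `det D = (-2) ^ (m + n) * det (1 - 2⁻¹ • C * Pᵀ * P)`, and `Pᵀ * P` is the
diagonal matrix of the part sizes `m, n`, leaving a `2 × 2` determinant.
-/

open Matrix Finset

namespace Matrix

variable {ι κ K : Type*} [Fintype ι] [DecidableEq ι] [Fintype κ] [DecidableEq κ] [Field K]

theorem det_smul_one_add_mul {s : K} (hs : s ≠ 0) (U : Matrix ι κ K) (V : Matrix κ ι K) :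
    det (s • 1 + U * V) = s ^ Fintype.card ι * det (1 + s⁻¹ • (V * U)) := by
  have : s • 1 + U * V = s • (1 + (s⁻¹ • U) * V) := by
    rw [smul_add, Matrix.smul_mul, smul_smul, mul_inv_cancel₀ hs, one_smul, smul_one_eq_diagonal]
  rw [this, det_smul, det_one_add_mul_comm, Matrix.mul_smul]

end Matrix

section Multipartite

variable {ι κ : Type*} (R : Type*) [DecidableEq κ]

def classIndicator [Zero R] [One R] (f : ι → κ) : Matrix ι κ R :=
  of fun i k => if f i = k then 1 else 0

def completeMultipartiteDistanceMatrix [DecidableEq ι] [AddMonoidWithOne R] (f : ι → κ) :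
    Matrix ι ι R :=
  of fun i j => if i = j then 0 else if f i = f j then 2 else 1

variable {R}

theorem classIndicator_mul_mul_transpose [Fintype κ] [NonAssocSemiring R] (f : ι → κ)
    (C : Matrix κ κ R) :
    classIndicator R f * C * (classIndicator R f)ᵀ = C.submatrix f f := by
  ext i j
  simp [classIndicator, mul_apply]

theorem transpose_classIndicator_mul_self [Fintype ι] [NonAssocSemiring R] (f : ι → κ) :
    (classIndicator R f)ᵀ * classIndicator R f = diagonal fun k => (#{i | f i = k} : R) := by
  ext k l
  simp only [mul_apply, transpose_apply, classIndicator, of_apply, mul_ite, mul_one, mul_zero,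
    ← ite_and, sum_boole, diagonal_apply]
  split_ifs with h
  · simp [h]
  · rw [filter_false_of_mem fun x _ hx => h (hx.2.symm.trans hx.1), card_empty, Nat.cast_zero]

theorem completeMultipartiteDistanceMatrix_eq [DecidableEq ι] [Fintype κ] [Ring R] (f : ι → κ) :
    completeMultipartiteDistanceMatrix R f =
      (-2 : R) • 1 + classIndicator R f * of (fun k l : κ => if k = l then (2 : R) else 1) *
        (classIndicator R f)ᵀ := by
  rw [classIndicator_mul_mul_transpose]
  ext i j
  by_cases hij : i = j
  · subst hij; simp [completeMultipartiteDistanceMatrix]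
  · simp [completeMultipartiteDistanceMatrix, hij]

theorem det_completeMultipartiteDistanceMatrix [Fintype ι] [DecidableEq ι] [Fintype κ]
    {K : Type*} [Field K] [NeZero (2 : K)] (f : ι → κ) :
    det (completeMultipartiteDistanceMatrix K f) = (-2) ^ Fintype.card ι *
      det (of fun k l => if k = l then 1 - (#{i | f i = k} : K) else -(#{i | f i = l} : K) / 2) := by
  rw [completeMultipartiteDistanceMatrix_eq, Matrix.mul_assoc,
    det_smul_one_add_mul (neg_ne_zero.mpr two_ne_zero), Matrix.mul_assoc,
    transpose_classIndicator_mul_self]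
  congr 2
  ext k l
  by_cases hkl : k = l
  · subst hkl; simp; field_simp; ring
  · simp [hkl]; field_simp

theorem det_completeBipartiteDistanceMatrix [Fintype ι] [DecidableEq ι]
    {K : Type*} [Field K] [NeZero (2 : K)] (f : ι → Fin 2) :
    det (completeMultipartiteDistanceMatrix K f) = (-2) ^ Fintype.card ι *
      ((1 - #{i | f i = 0}) * (1 - #{i | f i = 1}) - #{i | f i = 0} / 2 * (#{i | f i = 1} / 2)) := by
  rw [det_completeMultipartiteDistanceMatrix, det_fin_two]
  congr 1
  simp only [of_apply, if_true, if_neg (show (0 : Fin 2) ≠ 1 by decide),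
    if_neg (show (1 : Fin 2) ≠ 0 by decide)]
  ring

end Multipartite

/-- For all integers `m, n ≥ 1`, the determinant of the distance matrix of the complete
bipartite graph `K_{m,n}` equals `(-2)^(m+n-2) * (4(m-1)(n-1) - mn)`. Vertices are
`Fin (m+n)`; the first part consists of indices `< m`. -/
theorem det_distanceMatrix_Kmn (m n : ℕ) (hm : 1 ≤ m) (hn : 1 ≤ n)
    (D : Matrix (Fin (m + n)) (Fin (m + n)) ℝ)
    (hD : ∀ i j : Fin (m + n), D i j =
      if i = j then 0 else if (i.val < m ↔ j.val < m) then 2 else 1) :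
    D.det = (-2) ^ (m + n - 2) * (4 * ((m : ℝ) - 1) * ((n : ℝ) - 1) - (m : ℝ) * n) := by
  set part : Fin (m + n) → Fin 2 := fun i => if i.val < m then 0 else 1
  have hD_eq : D = completeMultipartiteDistanceMatrix ℝ part := by
    ext i j
    rw [hD]
    by_cases hi : i.val < m <;> by_cases hj : j.val < m <;>
      simp [completeMultipartiteDistanceMatrix, part, hi, hj]
  have h0 : #{i | part i = 0} = m := by
    simp [part, Fin.card_filter_val_lt]
  have h1 : #{i | part i = 1} = n := by
    have := card_filter_add_card_filter_not (s := univ) fun i : Fin (m + n) => i.val < m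
    simp only [Fin.card_filter_val_lt, card_univ, Fintype.card_fin] at this
    simp only [part, ite_eq_right_iff, zero_ne_one, imp_false]
    omega
  obtain ⟨k, hk⟩ : ∃ k, m + n = k + 2 := ⟨m + n - 2, by omega⟩
  rw [hD_eq, det_completeBipartiteDistanceMatrix, h0, h1, Fintype.card_fin, hk, Nat.add_sub_cancel,
    pow_add]
  ring
end

section
/- For all integers m, n ≥ 1, the determinant of the distance matrix D(K_{m,n}) equals 0 if and only if m = 2 and n = 2. -/
/-!
Writing `P` for the `0/1` matrix recording which part each vertex lies in, the distance matrix
of `K_{m,n}` is `-2 • 1 + P M Pᵀ` with `M = !![2, 1; 1, 2]`. The Weinstein–Aronszajn identity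
`det (1 + A B) = det (1 + B A)` reduces its determinant to a `2 × 2` one, using `Pᵀ P = diag(m, n)`:
`det D = (-2)^(m+n-2) (3mn - 4m - 4n + 4)`, and `3mn + 4 = 4(m + n)`, i.e. `(3m - 4)(3n - 4) = 4`,
has the single solution `m = n = 2` in positive integers.
-/

open Finset Matrix

namespace Matrix

variable {ι κ : Type*} [DecidableEq κ]

def partitionMatrix (R : Type*) [Zero R] [One R] (f : ι → κ) : Matrix ι κ R :=
  of fun i k => if f i = k then 1 else 0

theorem partitionMatrix_mul_mul_transpose [Fintype κ] {R : Type*} [CommSemiring R] (f : ι → κ)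
    (M : Matrix κ κ R) : partitionMatrix R f * M * (partitionMatrix R f)ᵀ = M.submatrix f f := by
  ext i j
  simp [partitionMatrix, mul_apply]

theorem transpose_partitionMatrix_mul_self [Fintype ι] {R : Type*} [CommSemiring R] (f : ι → κ) :
    (partitionMatrix R f)ᵀ * partitionMatrix R f = diagonal fun k => (#{i | f i = k} : R) := by
  ext k l
  by_cases hkl : k = l
  · subst hkl
    simp +contextual [partitionMatrix, mul_apply, Finset.sum_boole]
  · simp +contextual [partitionMatrix, mul_apply, hkl, Ne.symm hkl]

theorem det_smul_one_add_submatrix [Fintype ι] [DecidableEq ι] [Fintype κ] {K : Type*} [Field K]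
    (f : ι → κ) (M : Matrix κ κ K) {c : K} (hc : c ≠ 0) :
    det (c • 1 + M.submatrix f f) =
      c ^ Fintype.card ι * det (1 + c⁻¹ • (M * diagonal fun k => (#{i | f i = k} : K))) := by
  have hfactor : c • 1 + M.submatrix f f =
      c • (1 + partitionMatrix K f * (c⁻¹ • (M * (partitionMatrix K f)ᵀ))) := by
    rw [← partitionMatrix_mul_mul_transpose, Matrix.mul_smul, smul_add, smul_smul,
      mul_inv_cancel₀ hc, one_smul, Matrix.mul_assoc]
  rw [hfactor, det_smul, det_one_add_mul_comm, Matrix.smul_mul, Matrix.mul_assoc,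
    transpose_partitionMatrix_mul_self]

end Matrix

def bipartiteSide (m n : ℕ) (i : Fin (m + n)) : Fin 2 := if (i : ℕ) < m then 0 else 1

theorem card_bipartiteSide_eq_zero (m n : ℕ) : #{i | bipartiteSide m n i = 0} = m := by
  simp [bipartiteSide, Fin.card_filter_val_lt]

theorem card_bipartiteSide_eq_one (m n : ℕ) : #{i | bipartiteSide m n i = 1} = n := by
  have hside : ∀ i, bipartiteSide m n i = 1 ↔ ¬(i : ℕ) < m := by simp [bipartiteSide]
  simp_rw [hside, filter_not, card_sdiff_of_subset (filter_subset _ _), Fin.card_filter_val_lt]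
  simp

section CompleteBipartite

variable {m n : ℕ} {D : Matrix (Fin (m + n)) (Fin (m + n)) ℝ}

theorem eq_smul_one_add_submatrix_bipartiteSide
    (hD : ∀ i j : Fin (m + n), D i j =
      if i = j then 0 else if (i.val < m ↔ j.val < m) then 2 else 1) :
    D = (-2 : ℝ) • 1 + !![2, 1; 1, 2].submatrix (bipartiteSide m n) (bipartiteSide m n) := by
  ext i j
  rw [hD]
  by_cases hij : i = j
  · subst hij
    simp only [bipartiteSide, if_true, Matrix.add_apply, Matrix.smul_apply, one_apply_eq,
      submatrix_apply]
    split_ifs <;> norm_num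
  · by_cases hi : (i : ℕ) < m <;> by_cases hj : (j : ℕ) < m <;>
      simp [bipartiteSide, hij, hi, hj]

theorem det_eq_of_completeBipartite_distance
    (hD : ∀ i j : Fin (m + n), D i j =
      if i = j then 0 else if (i.val < m ↔ j.val < m) then 2 else 1) :
    D.det = (-2) ^ (m + n) * ((1 - m) * (1 - n) - m * n / 4) := by
  rw [eq_smul_one_add_submatrix_bipartiteSide hD,
    det_smul_one_add_submatrix _ _ (by norm_num : (-2 : ℝ) ≠ 0), Fintype.card_fin, det_fin_two]
  simp only [Matrix.add_apply, Matrix.smul_apply, mul_diagonal, card_bipartiteSide_eq_zero,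
    card_bipartiteSide_eq_one]
  simp
  ring

end CompleteBipartite

theorem Nat.three_mul_mul_add_four_eq_iff {m n : ℕ} (hm : 1 ≤ m) (hn : 1 ≤ n) :
    3 * m * n + 4 = 4 * (m + n) ↔ m = 2 ∧ n = 2 := by
  constructor
  · intro h
    have hm2 : 2 ≤ m := by
      by_contra!
      interval_cases m
      omega
    have hn2 : 2 ≤ n := by
      by_contra!
      interval_cases n
      omega
    constructor <;> nlinarith
  · rintro ⟨rfl, rfl⟩
    rfl

/-- For all integers `m, n ≥ 1`, the determinant of the distance matrix of `K_{m,n}`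
equals `0` if and only if `m = 2` and `n = 2`. Vertices are `Fin (m+n)`; the first part
consists of indices `< m`. -/
theorem det_distanceMatrix_Kmn_eq_zero_iff (m n : ℕ) (hm : 1 ≤ m) (hn : 1 ≤ n)
    (D : Matrix (Fin (m + n)) (Fin (m + n)) ℝ)
    (hD : ∀ i j : Fin (m + n), D i j =
      if i = j then 0 else if (i.val < m ↔ j.val < m) then 2 else 1) :
    D.det = 0 ↔ (m = 2 ∧ n = 2) := by
  rw [det_eq_of_completeBipartite_distance hD, mul_eq_zero,
    or_iff_right (pow_ne_zero _ (by norm_num)), ← Nat.three_mul_mul_add_four_eq_iff hm hn,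
    ← Nat.cast_inj (R := ℝ)]
  push_cast
  constructor <;> intro h <;> linarith
end

section
/- For every integer n ≥ 2, the distance matrix D(K_{n,1}) of the star graph K_{n,1} is invertible, and its inverse M is the real (n+1)×(n+1) matrix with entries: M_{ii} = 1/(2n) - 1/2 for i in {1,...,n}; M_{ij} = 1/(2n) for distinct i, j in {1,...,n}; M_{i,n+1} = M_{n+1,i} = 1/n for i in {1,...,n}; and M_{n+1,n+1} = -2(n-1)/n. -/
/-!
Row `i` of the distance matrix `D` of a star with centre `c` is `2·𝟙 - 2·eᵢ - e_c` when `i` is a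
leaf and `𝟙 - e_c` when `i = c`. Hence `(D M)ᵢⱼ` only involves the column sum `∑ₖ Mₖⱼ` and the
entries `Mᵢⱼ`, `M_cj`; for the proposed inverse `M` of a star with `n` leaves the column sums are
`1/n` at a leaf and `(2 - n)/n` at the centre, and the four cases (`i`, `j` leaf or centre) are
then a line of arithmetic each.
-/

open Finset

section Star

variable {ι : Type*} [Fintype ι] [DecidableEq ι]

def starDistMatrix (c : ι) : Matrix ι ι ℝ := Matrix.of fun i j =>
  if i = j then 0 else if i ≠ c ∧ j ≠ c then 2 else 1

noncomputable def starDistMatrixInv (c : ι) (n : ℕ) : Matrix ι ι ℝ := Matrix.of fun i j =>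
  if i ≠ c ∧ j ≠ c then (if i = j then 1 / (2 * (n : ℝ)) - 1 / 2 else 1 / (2 * (n : ℝ)))
  else if i ≠ c ∨ j ≠ c then 1 / (n : ℝ)
  else -(2 * ((n : ℝ) - 1)) / (n : ℝ)

theorem sum_starDistMatrix_mul (c : ι) (x : ι → ℝ) (i : ι) :
    ∑ k, starDistMatrix c i k * x k =
      if i = c then ∑ k, x k - x c else 2 * ∑ k, x k - 2 * x i - x c := by
  split_ifs with hi
  · subst hi
    have row (k : ι) : starDistMatrix i i k * x k = x k - if k = i then x k else 0 := by
      simp only [starDistMatrix, Matrix.of_apply]; split_ifs <;> grind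
    simp only [row, sum_sub_distrib, sum_ite_eq', mem_univ, if_true]
  · have row (k : ι) : starDistMatrix c i k * x k =
        2 * x k - (if k = i then 2 * x k else 0) - if k = c then x k else 0 := by
      simp only [starDistMatrix, Matrix.of_apply]; split_ifs <;> grind
    simp only [row, sum_sub_distrib, sum_ite_eq', mem_univ, if_true, mul_sum]

variable {n : ℕ}

theorem sum_starDistMatrixInv_apply (c : ι) (hcard : Fintype.card ι = n + 1) (hn : n ≠ 0)
    (j : ι) :
    ∑ k, starDistMatrixInv c n k j = if j = c then (2 - n : ℝ) / n else 1 / (n : ℝ) := by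
  have hn' : (n : ℝ) ≠ 0 := Nat.cast_ne_zero.mpr hn
  split_ifs with hj
  · subst hj
    have col (k : ι) : starDistMatrixInv j n k j =
        1 / n + if k = j then -(2 * ((n : ℝ) - 1)) / n - 1 / n else 0 := by
      simp only [starDistMatrixInv, Matrix.of_apply]; split_ifs <;> grind
    simp only [col, sum_add_distrib, sum_ite_eq', mem_univ, if_true, sum_const, card_univ, hcard,
      nsmul_eq_mul, Nat.cast_add, Nat.cast_one]
    field_simp
    ring
  · have col (k : ι) : starDistMatrixInv c n k j =
        1 / (2 * n : ℝ) - (if k = j then 1 / 2 else 0) + if k = c then 1 / (2 * n : ℝ) else 0 := by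
      simp only [starDistMatrixInv, Matrix.of_apply]; split_ifs <;> grind
    simp only [col, sum_add_distrib, sum_sub_distrib, sum_ite_eq', mem_univ, if_true, sum_const,
      card_univ, hcard, nsmul_eq_mul, Nat.cast_add, Nat.cast_one]
    field_simp
    ring

theorem starDistMatrix_mul_starDistMatrixInv (c : ι) (hcard : Fintype.card ι = n + 1)
    (hn : n ≠ 0) : starDistMatrix c * starDistMatrixInv c n = 1 := by
  have hn' : (n : ℝ) ≠ 0 := Nat.cast_ne_zero.mpr hn
  ext i j
  rw [Matrix.mul_apply, sum_starDistMatrix_mul, sum_starDistMatrixInv_apply c hcard hn]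
  simp only [starDistMatrixInv, Matrix.of_apply, Matrix.one_apply]
  split_ifs <;> field_simp <;> grind

end Star

/-- For every integer `n ≥ 2`, the distance matrix of the star graph `K_{n,1}` is
invertible, with the explicitly given inverse `M`. Vertices are `Fin (n+1)`; the part
`V₁` consists of indices `< n`, and the last index is the centre. -/
theorem inv_distanceMatrix_star (n : ℕ) (hn : 2 ≤ n)
    (D M : Matrix (Fin (n + 1)) (Fin (n + 1)) ℝ)
    (hD : ∀ i j : Fin (n + 1), D i j =
      if i = j then 0 else if i.val < n ∧ j.val < n then 2 else 1)
    (hM : ∀ i j : Fin (n + 1), M i j =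
      if i.val < n ∧ j.val < n then
        (if i = j then 1 / (2 * (n : ℝ)) - 1 / 2 else 1 / (2 * (n : ℝ)))
      else if i.val < n ∨ j.val < n then 1 / (n : ℝ)
      else -(2 * ((n : ℝ) - 1)) / (n : ℝ)) :
    IsUnit D ∧ D⁻¹ = M := by
  have val_lt_iff (i : Fin (n + 1)) : i.val < n ↔ i ≠ Fin.last n := Fin.lt_last_iff_ne_last
  have hD' : D = starDistMatrix (Fin.last n) := by
    ext i j; simp only [hD, starDistMatrix, Matrix.of_apply, val_lt_iff]
  have hM' : M = starDistMatrixInv (Fin.last n) n := by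
    ext i j; simp only [hM, starDistMatrixInv, Matrix.of_apply, val_lt_iff]
  have hDM : D * M = 1 := by
    rw [hD', hM']
    exact starDistMatrix_mul_starDistMatrixInv _ (Fintype.card_fin _) (by omega)
  exact ⟨IsUnit.of_mul_eq_one M hDM, Matrix.inv_eq_right_inv hDM⟩
end

section
/- Let m, n ≥ 1 be integers with not both m = 2 and n = 2, and set Δ = 3mn - 4(m+n-1). Then Δ ≠ 0, the distance matrix D(K_{m,n}) is invertible, and its inverse M has entries: M_{ii} = (3n-4)/(2Δ) - 1/2 for i in V_1; M_{ij} = (3n-4)/(2Δ) for distinct i, j in V_1; M_{ii} = (3m-4)/(2Δ) - 1/2 for i in V_2; M_{ij} = (3m-4)/(2Δ) for distinct i, j in V_2; and M_{ij} = -1/Δ whenever i and j lie in different parts. -/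
/-!
Both `D` and the candidate inverse `M` have the form `c • 1 + A.submatrix side side`, where
`side : Fin (m + n) → Fin 2` records the part of a vertex and `A` is a `2 × 2` matrix. The product
of the pullbacks of `A` and `B` along `side` is the pullback of `A * diagonal ![m, n] * B`, so
`D * M = 1` reduces to a `2 × 2` identity. Finally `Δ ≠ 0` because
`3Δ = (3m - 4)(3n - 4) - 4`, and `4` is a product of two integers of the form `3k - 4`, `k ≥ 1`,
only as `2 · 2`.
-/

open Finset Matrix

namespace Matrix

variable {ι κ R : Type*} [Fintype ι] [Fintype κ] [DecidableEq κ]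

theorem submatrix_mul_submatrix_eq_submatrix_mul_diagonal_card_mul [Semiring R]
    (f : ι → κ) (A B : Matrix κ κ R) :
    A.submatrix f f * B.submatrix f f =
      (A * diagonal (fun k => (#{i | f i = k} : R)) * B).submatrix f f := by
  ext i j
  rw [submatrix_apply, mul_apply, mul_apply, ← Finset.sum_fiberwise _ f]
  refine Finset.sum_congr rfl fun k _ => ?_
  rw [Finset.sum_congr rfl fun l hl => by rw [submatrix_apply, submatrix_apply,
    (Finset.mem_filter.mp hl).2], Finset.sum_const, nsmul_eq_mul, mul_diagonal,
    ← Nat.cast_comm, mul_assoc]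

theorem smul_one_add_submatrix_mul_smul_one_add_submatrix [DecidableEq ι] [CommRing R]
    (f : ι → κ) (c c' : R) (A B : Matrix κ κ R) :
    (c • 1 + A.submatrix f f) * (c' • 1 + B.submatrix f f) =
      (c * c') • 1 +
        (c • B + c' • A + A * diagonal (fun k => (#{i | f i = k} : R)) * B).submatrix f f := by
  rw [add_mul, mul_add, mul_add, submatrix_mul_submatrix_eq_submatrix_mul_diagonal_card_mul]
  simp only [Matrix.smul_mul, Matrix.mul_smul, Matrix.one_mul, Matrix.mul_one, smul_smul]
  ext i j
  simp only [add_apply, smul_apply, submatrix_apply, smul_eq_mul]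
  ring

end Matrix

def finAddSide (m n : ℕ) (i : Fin (m + n)) : Fin 2 := if i.val < m then 0 else 1

theorem card_finAddSide_eq (m n : ℕ) (k : Fin 2) : #{i | finAddSide m n i = k} = ![m, n] k := by
  fin_cases k
  · simp [finAddSide, Fin.card_filter_val_lt]
  · have := card_filter_add_card_filter_not (s := univ) (fun i : Fin (m + n) => i.val < m)
    simp_all [finAddSide, Fin.card_filter_val_lt]

theorem three_mul_mul_sub_four_mul_ne_zero {m n : ℕ} (hm : 1 ≤ m) (hn : 1 ≤ n)
    (hmn : ¬(m = 2 ∧ n = 2)) : (3 * m * n - 4 * (m + n - 1) : ℝ) ≠ 0 := by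
  suffices (3 * m * n - 4 * (m + n - 1) : ℤ) ≠ 0 by exact_mod_cast this
  intro h
  have key : ((3 * m - 4) * (3 * n - 4) : ℤ) = 4 := by linear_combination 3 * h
  rcases Nat.lt_or_ge m 3 with hm3 | hm3 <;> rcases Nat.lt_or_ge n 3 with hn3 | hn3
  · interval_cases m <;> interval_cases n <;> omega
  · interval_cases m <;> omega
  · interval_cases n <;> omega
  · nlinarith

/-- Let `m, n ≥ 1` with not both equal to `2`, and set `Δ = 3mn - 4(m+n-1)`. Then
`Δ ≠ 0`, the distance matrix of `K_{m,n}` is invertible, and its inverse is the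
explicitly given matrix `M`. Vertices are `Fin (m+n)`; the part `V₁` consists of
indices `< m`. -/
theorem inv_distanceMatrix_Kmn (m n : ℕ) (hm : 1 ≤ m) (hn : 1 ≤ n)
    (hmn : ¬(m = 2 ∧ n = 2))
    (Δ : ℝ) (hΔ : Δ = 3 * (m : ℝ) * n - 4 * ((m : ℝ) + n - 1))
    (D M : Matrix (Fin (m + n)) (Fin (m + n)) ℝ)
    (hD : ∀ i j : Fin (m + n), D i j =
      if i = j then 0 else if (i.val < m ↔ j.val < m) then 2 else 1)
    (hM : ∀ i j : Fin (m + n), M i j =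
      if i.val < m ∧ j.val < m then
        (if i = j then (3 * (n : ℝ) - 4) / (2 * Δ) - 1 / 2
         else (3 * (n : ℝ) - 4) / (2 * Δ))
      else if ¬ i.val < m ∧ ¬ j.val < m then
        (if i = j then (3 * (m : ℝ) - 4) / (2 * Δ) - 1 / 2
         else (3 * (m : ℝ) - 4) / (2 * Δ))
      else -1 / Δ) :
    Δ ≠ 0 ∧ IsUnit D ∧ D⁻¹ = M := by
  have hΔ0 : Δ ≠ 0 := hΔ ▸ three_mul_mul_sub_four_mul_ne_zero hm hn hmn
  set side := finAddSide m n
  set P : Matrix (Fin 2) (Fin 2) ℝ := !![2, 1; 1, 2] with hP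
  set Q : Matrix (Fin 2) (Fin 2) ℝ :=
    !![(3 * n - 4) / (2 * Δ), -1 / Δ; -1 / Δ, (3 * m - 4) / (2 * Δ)] with hQ
  have hD' : D = (-2 : ℝ) • 1 + P.submatrix side side := by
    ext i j
    rw [hD]
    by_cases hi : i.val < m <;> by_cases hj : j.val < m <;> by_cases hij : i = j <;>
      simp [side, finAddSide, P, one_apply, hi, hj, hij]
  have hM' : M = (-1 / 2 : ℝ) • 1 + Q.submatrix side side := by
    ext i j
    rw [hM]
    by_cases hi : i.val < m <;> by_cases hj : j.val < m <;> by_cases hij : i = j <;>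
      simp [side, finAddSide, Q, one_apply, hi, hj, hij] <;> ring
  have hcard : (fun k => (#{i | side i = k} : ℝ)) = ![(m : ℝ), n] := by
    ext k
    fin_cases k <;> simp [side, card_finAddSide_eq]
  have hPQ : (-2 : ℝ) • Q + (-1 / 2 : ℝ) • P + P * diagonal ![(m : ℝ), n] * Q = 0 := by
    rw [hP, hQ, diagonal_vec2, mul_fin_two, mul_fin_two]
    ext i j
    fin_cases i <;> fin_cases j <;> simp <;> field_simp <;> rw [hΔ] <;> ring
  have hDM : D * M = 1 := by
    rw [hD', hM', smul_one_add_submatrix_mul_smul_one_add_submatrix, hcard, hPQ]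
    norm_num
  exact ⟨hΔ0, (isUnit_iff_isUnit_det D).mpr (isUnit_det_of_right_inverse hDM),
    inv_eq_right_inv hDM⟩
end

section
/- Let n ≥ 3 and b ≥ 2 be integers with n ≠ 6. Then the distance matrix D(T_n^{(b)}) is invertible and D(T_n^{(b)})^{-1} = -(1/2)·L(T_n^{(b)}) + (1/(2b))·J + (1/(2b(n-6)))·R(T_n^{(b)}), where J is the all-ones matrix of order b(n-1)+1. -/
namespace TnbAux

lemma card_filter_lt_two {m : ℕ} (hm : 2 ≤ m) :
    (Finset.univ.filter fun i : Fin m => (i : ℕ) < 2).card = 2 := by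
  have h : (Finset.univ.filter fun i : Fin m => (i : ℕ) < 2)
      = {⟨0, by omega⟩, ⟨1, by omega⟩} := by
    ext i
    simp [Fin.ext_iff]
    omega
  rw [h]
  rw [Finset.card_insert_of_notMem (by simp [Fin.ext_iff])]
  simp

lemma sum_fin_base {m : ℕ} (hm : 2 ≤ m) (A B : ℝ) :
    ∑ i : Fin m, (if (i : ℕ) < 2 then A else B) = 2*A + ((m:ℝ)-2)*B := by
  have h : ∀ i : Fin m, (if (i : ℕ) < 2 then A else B)
      = B + (if (i : ℕ) < 2 then A - B else 0) := by
    intro i; split_ifs <;> ring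
  rw [Finset.sum_congr rfl (fun i _ => h i), Finset.sum_add_distrib,
    Finset.sum_const, Finset.sum_ite, Finset.sum_const, Finset.sum_const,
    card_filter_lt_two hm]
  simp [Finset.card_univ]
  have : (2:ℕ) ≤ m := hm
  have hmc : (2:ℝ) ≤ (m:ℝ) := by exact_mod_cast this
  ring

lemma sum_fin_one {m : ℕ} (hm : 2 ≤ m) (i₀ : Fin m) (C A B : ℝ) :
    ∑ i : Fin m, (if i = i₀ then C else if (i : ℕ) < 2 then A else B)
      = C - (if (i₀ : ℕ) < 2 then A else B) + (2*A + ((m:ℝ)-2)*B) := by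
  have h : ∀ i : Fin m, (if i = i₀ then C else if (i : ℕ) < 2 then A else B)
      = (if i = i₀ then C - (if (i₀ : ℕ) < 2 then A else B) else 0)
        + (if (i : ℕ) < 2 then A else B) := by
    intro i
    by_cases hi : i = i₀
    · subst hi; simp
    · simp [hi]
  rw [Finset.sum_congr rfl (fun i _ => h i), Finset.sum_add_distrib,
    Finset.sum_ite_eq' Finset.univ i₀, sum_fin_base hm]
  simp

lemma sum_fin_two_pts {m : ℕ} (hm : 2 ≤ m) (i₀ i₁ : Fin m) (h01 : i₀ ≠ i₁)
    (C₀ C₁ A B : ℝ) :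
    ∑ i : Fin m, (if i = i₀ then C₀ else if i = i₁ then C₁
        else if (i : ℕ) < 2 then A else B)
      = C₀ - (if (i₀ : ℕ) < 2 then A else B)
        + (C₁ - (if (i₁ : ℕ) < 2 then A else B)) + (2*A + ((m:ℝ)-2)*B) := by
  have h : ∀ i : Fin m, (if i = i₀ then C₀ else if i = i₁ then C₁
        else if (i : ℕ) < 2 then A else B)
      = (if i = i₀ then C₀ - (if (i₀ : ℕ) < 2 then A else B) else 0)
        + (if i = i₁ then C₁ - (if (i₁ : ℕ) < 2 then A else B) else 0)
        + (if (i : ℕ) < 2 then A else B) := by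
    intro i
    by_cases hi : i = i₀
    · subst hi; simp [h01]
    · by_cases hi' : i = i₁
      · subst hi'; simp [hi]
      · simp [hi, hi']
  rw [Finset.sum_congr rfl (fun i _ => h i), Finset.sum_add_distrib,
    Finset.sum_add_distrib, Finset.sum_ite_eq' Finset.univ i₀,
    Finset.sum_ite_eq' Finset.univ i₁, sum_fin_base hm]
  simp

lemma sum_fin_pt {b : ℕ} (k₀ : Fin b) (X Y : ℝ) :
    ∑ k : Fin b, (if k = k₀ then X else Y) = X - Y + (b:ℝ)*Y := by
  have h : ∀ k : Fin b, (if k = k₀ then X else Y)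
      = (if k = k₀ then X - Y else 0) + Y := by
    intro k; split_ifs <;> ring
  rw [Finset.sum_congr rfl (fun k _ => h k), Finset.sum_add_distrib,
    Finset.sum_ite_eq' Finset.univ k₀, Finset.sum_const]
  simp [Finset.card_univ]

lemma sum_fin_pt2 {b : ℕ} (k₀ k₁ : Fin b) (h01 : k₀ ≠ k₁) (X Y Z : ℝ) :
    ∑ k : Fin b, (if k = k₀ then X else if k = k₁ then Y else Z)
      = X - Z + (Y - Z) + (b:ℝ)*Z := by
  have h : ∀ k : Fin b, (if k = k₀ then X else if k = k₁ then Y else Z)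
      = (if k = k₀ then X - Z else 0) + (if k = k₁ then Y - Z else 0) + Z := by
    intro k
    by_cases hk : k = k₀
    · subst hk; simp [h01]
    · by_cases hk' : k = k₁
      · subst hk'; simp [hk]
      · simp [hk, hk']
  rw [Finset.sum_congr rfl (fun k _ => h k), Finset.sum_add_distrib,
    Finset.sum_add_distrib, Finset.sum_ite_eq' Finset.univ k₀,
    Finset.sum_ite_eq' Finset.univ k₁, Finset.sum_const]
  simp [Finset.card_univ]

lemma ML1 {b m : ℕ} (hm : 2 ≤ m) (k₀ : Fin b) (i₀ : Fin m)
    (E₀ E₁ E₂ E₃ E₄ : ℝ) (f : Fin b → Fin m → ℝ)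
    (hf : ∀ k i, f k i = if k = k₀ then
        (if i = i₀ then E₀ else if (i : ℕ) < 2 then E₁ else E₂)
      else (if (i : ℕ) < 2 then E₃ else E₄)) :
    ∑ k : Fin b, ∑ i : Fin m, f k i
      = (E₀ - (if (i₀ : ℕ) < 2 then E₁ else E₂) + (2*E₁ + ((m:ℝ)-2)*E₂))
        - (2*E₃ + ((m:ℝ)-2)*E₄) + (b:ℝ)*(2*E₃ + ((m:ℝ)-2)*E₄) := by
  have h : ∀ k : Fin b, ∑ i : Fin m, f k i
      = if k = k₀ then (E₀ - (if (i₀ : ℕ) < 2 then E₁ else E₂) + (2*E₁ + ((m:ℝ)-2)*E₂))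
        else (2*E₃ + ((m:ℝ)-2)*E₄) := by
    intro k
    by_cases hk : k = k₀
    · rw [if_pos hk, Finset.sum_congr rfl fun i _ => by rw [hf k i, if_pos hk],
        sum_fin_one hm]
    · rw [if_neg hk, Finset.sum_congr rfl fun i _ => by rw [hf k i, if_neg hk],
        sum_fin_base hm]
  rw [Finset.sum_congr rfl (fun k _ => h k), sum_fin_pt]

lemma ML2 {b m : ℕ} (hm : 2 ≤ m) (k₀ : Fin b) (i₀ i₁ : Fin m) (h01 : i₀ ≠ i₁)
    (E₀ E₀' E₁ E₂ E₃ E₄ : ℝ) (f : Fin b → Fin m → ℝ)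
    (hf : ∀ k i, f k i = if k = k₀ then
        (if i = i₀ then E₀ else if i = i₁ then E₀'
          else if (i : ℕ) < 2 then E₁ else E₂)
      else (if (i : ℕ) < 2 then E₃ else E₄)) :
    ∑ k : Fin b, ∑ i : Fin m, f k i
      = (E₀ - (if (i₀ : ℕ) < 2 then E₁ else E₂)
          + (E₀' - (if (i₁ : ℕ) < 2 then E₁ else E₂)) + (2*E₁ + ((m:ℝ)-2)*E₂))
        - (2*E₃ + ((m:ℝ)-2)*E₄) + (b:ℝ)*(2*E₃ + ((m:ℝ)-2)*E₄) := by
  have h : ∀ k : Fin b, ∑ i : Fin m, f k i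
      = if k = k₀ then (E₀ - (if (i₀ : ℕ) < 2 then E₁ else E₂)
          + (E₀' - (if (i₁ : ℕ) < 2 then E₁ else E₂)) + (2*E₁ + ((m:ℝ)-2)*E₂))
        else (2*E₃ + ((m:ℝ)-2)*E₄) := by
    intro k
    by_cases hk : k = k₀
    · rw [if_pos hk, Finset.sum_congr rfl fun i _ => by rw [hf k i, if_pos hk],
        sum_fin_two_pts hm _ _ h01]
    · rw [if_neg hk, Finset.sum_congr rfl fun i _ => by rw [hf k i, if_neg hk],
        sum_fin_base hm]
  rw [Finset.sum_congr rfl (fun k _ => h k), sum_fin_pt]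

lemma ML3 {b m : ℕ} (hm : 2 ≤ m) (k₀ k₁ : Fin b) (hk01 : k₀ ≠ k₁)
    (i₀ i₁ : Fin m) (F₀ F₁ F₂ H₀ H₁ H₂ E₃ E₄ : ℝ) (f : Fin b → Fin m → ℝ)
    (hf : ∀ k i, f k i = if k = k₀ then
        (if i = i₀ then F₀ else if (i : ℕ) < 2 then F₁ else F₂)
      else if k = k₁ then
        (if i = i₁ then H₀ else if (i : ℕ) < 2 then H₁ else H₂)
      else (if (i : ℕ) < 2 then E₃ else E₄)) :
    ∑ k : Fin b, ∑ i : Fin m, f k i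
      = (F₀ - (if (i₀ : ℕ) < 2 then F₁ else F₂) + (2*F₁ + ((m:ℝ)-2)*F₂))
        - (2*E₃ + ((m:ℝ)-2)*E₄)
        + ((H₀ - (if (i₁ : ℕ) < 2 then H₁ else H₂) + (2*H₁ + ((m:ℝ)-2)*H₂))
            - (2*E₃ + ((m:ℝ)-2)*E₄))
        + (b:ℝ)*(2*E₃ + ((m:ℝ)-2)*E₄) := by
  have h : ∀ k : Fin b, ∑ i : Fin m, f k i
      = if k = k₀ then (F₀ - (if (i₀ : ℕ) < 2 then F₁ else F₂) + (2*F₁ + ((m:ℝ)-2)*F₂))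
        else if k = k₁ then (H₀ - (if (i₁ : ℕ) < 2 then H₁ else H₂) + (2*H₁ + ((m:ℝ)-2)*H₂))
        else (2*E₃ + ((m:ℝ)-2)*E₄) := by
    intro k
    by_cases hk : k = k₀
    · rw [if_pos hk, Finset.sum_congr rfl fun i _ => by rw [hf k i, if_pos hk],
        sum_fin_one hm]
    · by_cases hk' : k = k₁
      · rw [if_neg hk, if_pos hk',
          Finset.sum_congr rfl fun i _ => by rw [hf k i, if_neg hk, if_pos hk'],
          sum_fin_one hm]
      · rw [if_neg hk, if_neg hk',
          Finset.sum_congr rfl fun i _ => by rw [hf k i, if_neg hk, if_neg hk'],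
          sum_fin_base hm]
  rw [Finset.sum_congr rfl (fun k _ => h k), sum_fin_pt2 _ _ hk01]


lemma ML0' {b m : ℕ} (hm : 2 ≤ m) (E₃ E₄ : ℝ) (f : Fin b × Fin m → ℝ)
    (hf : ∀ k i, f (k, i) = if (i : ℕ) < 2 then E₃ else E₄) :
    ∑ p : Fin b × Fin m, f p = (b:ℝ)*(2*E₃ + ((m:ℝ)-2)*E₄) := by
  rw [Fintype.sum_prod_type,
    Finset.sum_congr rfl fun k _ => Finset.sum_congr rfl fun i _ => hf k i,
    Finset.sum_congr rfl fun k _ => sum_fin_base hm E₃ E₄,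
    Finset.sum_const, Finset.card_univ, Fintype.card_fin, nsmul_eq_mul]

lemma ML1' {b m : ℕ} (hm : 2 ≤ m) (k₀ : Fin b) (i₀ : Fin m)
    (E₀ E₁ E₂ E₃ E₄ : ℝ) (f : Fin b × Fin m → ℝ)
    (hf : ∀ k i, f (k, i) = if k = k₀ then
        (if i = i₀ then E₀ else if (i : ℕ) < 2 then E₁ else E₂)
      else (if (i : ℕ) < 2 then E₃ else E₄)) :
    ∑ p : Fin b × Fin m, f p
      = (E₀ - (if (i₀ : ℕ) < 2 then E₁ else E₂) + (2*E₁ + ((m:ℝ)-2)*E₂))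
        - (2*E₃ + ((m:ℝ)-2)*E₄) + (b:ℝ)*(2*E₃ + ((m:ℝ)-2)*E₄) := by
  rw [Fintype.sum_prod_type]
  exact ML1 hm k₀ i₀ E₀ E₁ E₂ E₃ E₄ (fun k i => f (k, i)) hf

lemma ML2' {b m : ℕ} (hm : 2 ≤ m) (k₀ : Fin b) (i₀ i₁ : Fin m) (h01 : i₀ ≠ i₁)
    (E₀ E₀' E₁ E₂ E₃ E₄ : ℝ) (f : Fin b × Fin m → ℝ)
    (hf : ∀ k i, f (k, i) = if k = k₀ then
        (if i = i₀ then E₀ else if i = i₁ then E₀'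
          else if (i : ℕ) < 2 then E₁ else E₂)
      else (if (i : ℕ) < 2 then E₃ else E₄)) :
    ∑ p : Fin b × Fin m, f p
      = (E₀ - (if (i₀ : ℕ) < 2 then E₁ else E₂)
          + (E₀' - (if (i₁ : ℕ) < 2 then E₁ else E₂)) + (2*E₁ + ((m:ℝ)-2)*E₂))
        - (2*E₃ + ((m:ℝ)-2)*E₄) + (b:ℝ)*(2*E₃ + ((m:ℝ)-2)*E₄) := by
  rw [Fintype.sum_prod_type]
  exact ML2 hm k₀ i₀ i₁ h01 E₀ E₀' E₁ E₂ E₃ E₄ (fun k i => f (k, i)) hf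

lemma ML3' {b m : ℕ} (hm : 2 ≤ m) (k₀ k₁ : Fin b) (hk01 : k₀ ≠ k₁)
    (i₀ i₁ : Fin m) (F₀ F₁ F₂ H₀ H₁ H₂ E₃ E₄ : ℝ) (f : Fin b × Fin m → ℝ)
    (hf : ∀ k i, f (k, i) = if k = k₀ then
        (if i = i₀ then F₀ else if (i : ℕ) < 2 then F₁ else F₂)
      else if k = k₁ then
        (if i = i₁ then H₀ else if (i : ℕ) < 2 then H₁ else H₂)
      else (if (i : ℕ) < 2 then E₃ else E₄)) :
    ∑ p : Fin b × Fin m, f p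
      = (F₀ - (if (i₀ : ℕ) < 2 then F₁ else F₂) + (2*F₁ + ((m:ℝ)-2)*F₂))
        - (2*E₃ + ((m:ℝ)-2)*E₄)
        + ((H₀ - (if (i₁ : ℕ) < 2 then H₁ else H₂) + (2*H₁ + ((m:ℝ)-2)*H₂))
            - (2*E₃ + ((m:ℝ)-2)*E₄))
        + (b:ℝ)*(2*E₃ + ((m:ℝ)-2)*E₄) := by
  rw [Fintype.sum_prod_type]
  exact ML3 hm k₀ k₁ hk01 i₀ i₁ F₀ F₁ F₂ H₀ H₁ H₂ E₃ E₄ (fun k i => f (k, i)) hf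

end TnbAux

open TnbAux
set_option maxHeartbeats 2000000 in

/-- Let `n ≥ 3`, `b ≥ 2` with `n ≠ 6`. Then the distance matrix of `T_n^(b)` is
invertible and
`D(T_n^(b))⁻¹ = -(1/2)·L(T_n^(b)) + (1/(2b))·J + (1/(2b(n-6)))·R(T_n^(b))`.
Vertices: `Sum.inl (k, i)` is the vertex `i` (0-based, so base vertices have
`i.val < 2`) of block `k`, and `Sum.inr ()` is the central cut vertex `c`. -/
theorem inv_distanceMatrix_Tnb (n b : ℕ) (hn : 3 ≤ n) (hb : 2 ≤ b) (hn6 : n ≠ 6)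
    (D L R J : Matrix ((Fin b × Fin (n - 1)) ⊕ Unit) ((Fin b × Fin (n - 1)) ⊕ Unit) ℝ)
    -- the distance matrix
    (hD₁ : ∀ (k k' : Fin b) (i j : Fin (n - 1)),
      D (Sum.inl (k, i)) (Sum.inl (k', j)) =
        if k = k' then
          (if i = j then 0 else if i.val < 2 ∨ j.val < 2 then 1 else 2)
        else
          (if i.val < 2 ∧ j.val < 2 then 2
           else if i.val < 2 ∨ j.val < 2 then 3 else 4))
    (hD₂ : ∀ (k : Fin b) (i : Fin (n - 1)),
      D (Sum.inl (k, i)) (Sum.inr ()) = if i.val < 2 then 1 else 2)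
    (hD₃ : ∀ (k : Fin b) (i : Fin (n - 1)),
      D (Sum.inr ()) (Sum.inl (k, i)) = if i.val < 2 then 1 else 2)
    (hD₄ : D (Sum.inr ()) (Sum.inr ()) = 0)
    -- the Laplacian matrix
    (hL₁ : ∀ (k k' : Fin b) (i j : Fin (n - 1)),
      L (Sum.inl (k, i)) (Sum.inl (k', j)) =
        if k = k' then
          (if i = j then (if i.val < 2 then (n : ℝ) - 1 else 2)
           else if i.val < 2 ∨ j.val < 2 then -1 else 0)
        else 0)
    (hL₂ : ∀ (k : Fin b) (i : Fin (n - 1)),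
      L (Sum.inl (k, i)) (Sum.inr ()) = if i.val < 2 then -1 else 0)
    (hL₃ : ∀ (k : Fin b) (i : Fin (n - 1)),
      L (Sum.inr ()) (Sum.inl (k, i)) = if i.val < 2 then -1 else 0)
    (hL₄ : L (Sum.inr ()) (Sum.inr ()) = 2 * (b : ℝ))
    -- the matrix R
    (hR₁ : ∀ (k k' : Fin b) (i j : Fin (n - 1)),
      R (Sum.inl (k, i)) (Sum.inl (k', j)) =
        if k = k' then
          (if i = j then
            (if i.val < 2 then ((n : ℝ) - 5) * ((n : ℝ) - 2) * ((b : ℝ) - 1)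
             else (b : ℝ) * ((n : ℝ) - 6) + ((b : ℝ) - (n : ℝ) + 5))
           else if i.val < 2 ∧ j.val < 2 then ((n : ℝ) - 2) * ((b : ℝ) - (n : ℝ) + 5)
           else if i.val < 2 ∨ j.val < 2 then -(((n : ℝ) - 4) * (b : ℝ) - 2)
           else (b : ℝ) - (n : ℝ) + 5)
        else
          (if i.val < 2 ∧ j.val < 2 then -(((n : ℝ) - 5) * ((n : ℝ) - 2))
           else if i.val < 2 ∨ j.val < 2 then 2
           else -((n : ℝ) - 5)))
    (hR₂ : ∀ (k : Fin b) (i : Fin (n - 1)),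
      R (Sum.inl (k, i)) (Sum.inr ()) =
        if i.val < 2 then ((n : ℝ) - 6) * (((n : ℝ) - 4) * (b : ℝ) - ((n : ℝ) - 3))
        else -((b : ℝ) * ((n : ℝ) - 6)))
    (hR₃ : ∀ (k : Fin b) (i : Fin (n - 1)),
      R (Sum.inr ()) (Sum.inl (k, i)) =
        if i.val < 2 then ((n : ℝ) - 6) * (((n : ℝ) - 4) * (b : ℝ) - ((n : ℝ) - 3))
        else -((b : ℝ) * ((n : ℝ) - 6)))
    (hR₄ : R (Sum.inr ()) (Sum.inr ()) =
      -(((n : ℝ) - 5) * ((n : ℝ) - 6) * ((b : ℝ) - 1) ^ 2))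
    -- the all-ones matrix
    (hJ : ∀ u v, J u v = 1) :
    IsUnit D ∧
      D⁻¹ = (-(1 / 2) : ℝ) • L + (1 / (2 * (b : ℝ))) • J
        + (1 / (2 * (b : ℝ) * ((n : ℝ) - 6))) • R := by
  classical
  set N : ℝ := (n : ℝ) with hN
  set B : ℝ := (b : ℝ) with hB
  have hm2 : 2 ≤ n - 1 := by omega
  have hmcast : ((n - 1 : ℕ) : ℝ) = N - 1 := by
    rw [hN, Nat.cast_sub (by omega : 1 ≤ n)]; norm_num
  have hB0 : B ≠ 0 := by
    rw [hB]; exact Nat.cast_ne_zero.mpr (by omega)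
  have hN6' : N - 6 ≠ 0 := by
    rw [hN]
    intro h
    apply hn6
    have h6 : (n : ℝ) = 6 := by linarith
    exact_mod_cast h6
  set G : Matrix ((Fin b × Fin (n - 1)) ⊕ Unit) ((Fin b × Fin (n - 1)) ⊕ Unit) ℝ :=
    (-(B*(N-6))) • L + (N-6) • J + R with hGdef
  have hG₁ : ∀ (k k' : Fin b) (i j : Fin (n - 1)),
      G (Sum.inl (k, i)) (Sum.inl (k', j)) =
        if k = k' then
          (if i = j then (if (i:ℕ) < 2 then 4*B - (N-4)^2 else -(B*N) + 7*B - 1)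
           else if (i:ℕ) < 2 ∧ (j:ℕ) < 2 then (N-4)*(2*B-N+4)
           else if (i:ℕ) < 2 ∨ (j:ℕ) < 2 then (N-4) - 2*B
           else B - 1)
        else (if (i:ℕ) < 2 ∧ (j:ℕ) < 2 then -((N-4)^2)
              else if (i:ℕ) < 2 ∨ (j:ℕ) < 2 then N - 4 else -1) := by
    intro k k' i j
    simp only [hGdef, Matrix.add_apply, Matrix.smul_apply, smul_eq_mul, hL₁, hJ, hR₁]
    split_ifs <;> first | ring1 | (exfalso; omega) | (subst_vars; first | ring1 | (exfalso; omega) | (exfalso; exact absurd rfl (by assumption)))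
  have hG₂ : ∀ (k : Fin b) (i : Fin (n - 1)),
      G (Sum.inl (k, i)) (Sum.inr ()) =
        if (i:ℕ) < 2 then (N-6)*((N-3)*B-(N-4)) else -((N-6)*(B-1)) := by
    intro k i
    simp only [hGdef, Matrix.add_apply, Matrix.smul_apply, smul_eq_mul, hL₂, hJ, hR₂]
    split_ifs <;> ring
  have hG₃ : ∀ (k : Fin b) (i : Fin (n - 1)),
      G (Sum.inr ()) (Sum.inl (k, i)) =
        if (i:ℕ) < 2 then (N-6)*((N-3)*B-(N-4)) else -((N-6)*(B-1)) := by
    intro k i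
    simp only [hGdef, Matrix.add_apply, Matrix.smul_apply, smul_eq_mul, hL₃, hJ, hR₃]
    split_ifs <;> ring
  have hG₄ : G (Sum.inr ()) (Sum.inr ()) =
      -(B*(N-6))*(2*B) + (N-6) - (N-5)*(N-6)*(B-1)^2 := by
    simp only [hGdef, Matrix.add_apply, Matrix.smul_apply, smul_eq_mul, hL₄, hJ, hR₄]
    ring
  have key : D * G = (2*B*(N-6)) • (1 : Matrix ((Fin b × Fin (n - 1)) ⊕ Unit) ((Fin b × Fin (n - 1)) ⊕ Unit) ℝ) := by
    ext u v
    rw [Matrix.mul_apply]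
    simp only [Matrix.smul_apply, Matrix.one_apply, smul_eq_mul,
      Fintype.sum_sum_type, Fintype.sum_unique]
    rcases u with ⟨ku, iu⟩ | _
    · rcases v with ⟨kv, iv⟩ | _
      · by_cases hkk : ku = kv
        · subst hkk
          by_cases hii : iu = iv
          · subst hii
            rw [if_pos rfl]
            by_cases hbu : (iu:ℕ) < 2
            all_goals
              (have hs := ML1' hm2 ku iu 0
                (if (iu:ℕ) < 2 then (N-4)*(2*B-N+4) else (N-4)-2*B)
                ((if (iu:ℕ) < 2 then (1:ℝ) else 2) * (if (iu:ℕ) < 2 then (N-4)-2*B else B-1))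
                ((if (iu:ℕ) < 2 then (2:ℝ) else 3) * (if (iu:ℕ) < 2 then -((N-4)^2) else N-4))
                ((if (iu:ℕ) < 2 then (3:ℝ) else 4) * (if (iu:ℕ) < 2 then N-4 else -1))
                (fun p => D (Sum.inl (ku, iu)) (Sum.inl p) * G (Sum.inl p) (Sum.inl (ku, iu)))
                (by intro k i; simp only [hD₁, hG₁, hbu, true_or, or_true, false_or, or_false, true_and, and_true, false_and, and_false, if_true, if_false]; split_ifs <;> first | ring1 | (exfalso; omega) | (subst_vars; first | ring1 | (exfalso; omega) | (exfalso; exact absurd rfl (by assumption))))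
               rw [hs, hD₂, hG₃, hmcast]
               simp [hbu]
               try ring)
          · rw [if_neg (by simp [hii])]
            by_cases hbu : (iu:ℕ) < 2 <;> by_cases hbv : (iv:ℕ) < 2
            all_goals
              (have hs := ML2' hm2 ku iu iv hii 0
                ((if (iu:ℕ) < 2 ∨ (iv:ℕ) < 2 then (1:ℝ) else 2) * (if (iv:ℕ) < 2 then 4*B-(N-4)^2 else -(B*N)+7*B-1))
                (if (iv:ℕ) < 2 then (N-4)*(2*B-N+4) else (N-4)-2*B)
                ((if (iu:ℕ) < 2 then (1:ℝ) else 2) * (if (iv:ℕ) < 2 then (N-4)-2*B else B-1))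
                ((if (iu:ℕ) < 2 then (2:ℝ) else 3) * (if (iv:ℕ) < 2 then -((N-4)^2) else N-4))
                ((if (iu:ℕ) < 2 then (3:ℝ) else 4) * (if (iv:ℕ) < 2 then N-4 else -1))
                (fun p => D (Sum.inl (ku, iu)) (Sum.inl p) * G (Sum.inl p) (Sum.inl (ku, iv)))
                (by intro k i; simp only [hD₁, hG₁, hbu, hbv, true_or, or_true, false_or, or_false, true_and, and_true, false_and, and_false, if_true, if_false]; split_ifs <;> first | ring1 | (exfalso; omega) | (subst_vars; first | ring1 | (exfalso; omega) | (exfalso; exact absurd rfl (by assumption))))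
               rw [hs, hD₂, hG₃, hmcast]
               simp [hbu, hbv]
               try ring)
        · rw [if_neg (by simp [hkk])]
          by_cases hbu : (iu:ℕ) < 2 <;> by_cases hbv : (iv:ℕ) < 2
          all_goals
            (have hs := ML3' hm2 ku kv hkk iu iv 0
              (if (iv:ℕ) < 2 then -((N-4)^2) else N-4)
              ((if (iu:ℕ) < 2 then (1:ℝ) else 2) * (if (iv:ℕ) < 2 then N-4 else -1))
              ((if (iu:ℕ) < 2 ∧ (iv:ℕ) < 2 then (2:ℝ) else if (iu:ℕ) < 2 ∨ (iv:ℕ) < 2 then 3 else 4) * (if (iv:ℕ) < 2 then 4*B-(N-4)^2 else -(B*N)+7*B-1))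
              ((if (iu:ℕ) < 2 then (2:ℝ) else 3) * (if (iv:ℕ) < 2 then (N-4)*(2*B-N+4) else (N-4)-2*B))
              ((if (iu:ℕ) < 2 then (3:ℝ) else 4) * (if (iv:ℕ) < 2 then (N-4)-2*B else B-1))
              ((if (iu:ℕ) < 2 then (2:ℝ) else 3) * (if (iv:ℕ) < 2 then -((N-4)^2) else N-4))
              ((if (iu:ℕ) < 2 then (3:ℝ) else 4) * (if (iv:ℕ) < 2 then N-4 else -1))
              (fun p => D (Sum.inl (ku, iu)) (Sum.inl p) * G (Sum.inl p) (Sum.inl (kv, iv)))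
              (by intro k i; simp only [hD₁, hG₁, hbu, hbv, true_or, or_true, false_or, or_false, true_and, and_true, false_and, and_false, if_true, if_false]; split_ifs <;> first | ring1 | (exfalso; omega) | (subst_vars; first | ring1 | (exfalso; omega) | (exfalso; exact absurd rfl (by assumption))))
             rw [hs, hD₂, hG₃, hmcast]
             simp [hbu, hbv]
             try ring)
      · rw [if_neg (by simp)]
        by_cases hbu : (iu:ℕ) < 2
        all_goals
          (have hs := ML1' hm2 ku iu 0
            ((N-6)*((N-3)*B-(N-4)))
            ((if (iu:ℕ) < 2 then (1:ℝ) else 2) * (-((N-6)*(B-1))))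
            ((if (iu:ℕ) < 2 then (2:ℝ) else 3) * ((N-6)*((N-3)*B-(N-4))))
            ((if (iu:ℕ) < 2 then (3:ℝ) else 4) * (-((N-6)*(B-1))))
            (fun p => D (Sum.inl (ku, iu)) (Sum.inl p) * G (Sum.inl p) (Sum.inr ()))
            (by intro k i; simp only [hD₁, hbu, hG₂, true_or, or_true, false_or, or_false, true_and, and_true, false_and, and_false, if_true, if_false]; split_ifs <;> first | ring1 | (exfalso; omega) | (subst_vars; first | ring1 | (exfalso; omega) | (exfalso; exact absurd rfl (by assumption))))
           rw [hs, hD₂, hG₄, hmcast]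
           simp [hbu]
           try ring)
    · rcases v with ⟨kv, iv⟩ | _
      · rw [if_neg (by simp)]
        by_cases hbv : (iv:ℕ) < 2
        all_goals
          (have hs := ML1' hm2 kv iv
            ((if (iv:ℕ) < 2 then (1:ℝ) else 2) * (if (iv:ℕ) < 2 then 4*B-(N-4)^2 else -(B*N)+7*B-1))
            (if (iv:ℕ) < 2 then (N-4)*(2*B-N+4) else (N-4)-2*B)
            (2 * (if (iv:ℕ) < 2 then (N-4)-2*B else B-1))
            (if (iv:ℕ) < 2 then -((N-4)^2) else N-4)
            (2 * (if (iv:ℕ) < 2 then N-4 else -1))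
            (fun p => D (Sum.inr ()) (Sum.inl p) * G (Sum.inl p) (Sum.inl (kv, iv)))
            (by intro k i; simp only [hD₃, hG₁, hbv, true_or, or_true, false_or, or_false, true_and, and_true, false_and, and_false, if_true, if_false]; split_ifs <;> first | ring1 | (exfalso; omega) | (subst_vars; first | ring1 | (exfalso; omega) | (exfalso; exact absurd rfl (by assumption))))
           rw [hs, hD₄, hG₃, hmcast]
           simp [hbv]
           try ring)
      · rw [if_pos rfl]
        have hs := ML0' (b := b) hm2
          ((N-6)*((N-3)*B-(N-4)))
          (2 * (-((N-6)*(B-1))))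
          (fun p => D (Sum.inr ()) (Sum.inl p) * G (Sum.inl p) (Sum.inr ()))
          (by intro k i; simp only [hD₃, hG₂]; split_ifs <;> ring1)
        rw [hs, hD₄, hmcast]
        ring
  have hc : (1/(2*B*(N-6))) * (2*B*(N-6)) = 1 := by field_simp
  have hMeq : (-(1/2) : ℝ) • L + (1/(2*B)) • J + (1/(2*B*(N-6))) • R
      = (1/(2*B*(N-6))) • G := by
    rw [hGdef, smul_add, smul_add, smul_smul, smul_smul]
    congr 2
    · congr 1
      field_simp
    · congr 1
      field_simp
  have hDM : D * ((-(1/2) : ℝ) • L + (1/(2*B)) • J + (1/(2*B*(N-6))) • R) = 1 := by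
    rw [hMeq, Matrix.mul_smul, key, smul_smul, hc, one_smul]
  exact ⟨⟨⟨D, _, hDM, mul_eq_one_comm.mp hDM⟩, rfl⟩, Matrix.inv_eq_right_inv hDM⟩
end

section
/- Let n ≥ 3 and b ≥ 2 be integers, and let R[B] be the principal submatrix of R(T_n^{(b)}) on the 2b base vertices. Then the characteristic polynomial of R[B] equals (x + (n-2)(n-6)b) · (x - (n-2)(n-6)b)^b · (x - (n-2)(n-4)b)^{b-1}; equivalently, the eigenvalues of R[B] are -(n-2)(n-6)b with multiplicity 1, (n-2)(n-6)b with multiplicity b, and (n-2)(n-4)b with multiplicity b-1. -/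
open Polynomial

namespace CharAux

open Matrix Kronecker Finset

variable {m : Type*} [DecidableEq m] [Fintype m]

lemma charmatrix_conj (P P' A : Matrix m m ℝ) (hP : P * P' = 1) :
    charmatrix (P * A * P') = P.map C * charmatrix A * P'.map C := by
  have h1 : (P.map (C : ℝ →+* ℝ[X])) * (P'.map C) = 1 := by
    rw [← Matrix.map_mul, hP, Matrix.map_one _ (map_zero C) (map_one C)]
  have hs : Matrix.scalar m (X : ℝ[X]) * P.map C = P.map C * Matrix.scalar m X :=
    Matrix.scalar_commute _ (fun r' => Commute.all _ _) _
  rw [charmatrix, charmatrix, RingHom.mapMatrix_apply, RingHom.mapMatrix_apply]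
  rw [mul_sub, sub_mul]
  congr 1
  · rw [← hs, mul_assoc, h1, mul_one]
  · rw [← Matrix.map_mul, ← Matrix.map_mul]

lemma charpoly_similar (P P' A D : Matrix m m ℝ) (hP : P * P' = 1)
    (h : A * P = P * D) : A.charpoly = D.charpoly := by
  have hA : A = P * D * P' := by
    calc A = A * P * P' := by rw [mul_assoc, hP, mul_one]
    _ = P * D * P' := by rw [h]
  have key : (P.map (C : ℝ →+* ℝ[X])).det * (P'.map C).det = 1 := by
    rw [← Matrix.det_mul, ← Matrix.map_mul, hP, Matrix.map_one _ (map_zero C) (map_one C),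
      Matrix.det_one]
  rw [Matrix.charpoly, Matrix.charpoly, hA, charmatrix_conj _ _ _ hP, Matrix.det_mul,
    Matrix.det_mul]
  linear_combination (Matrix.charmatrix D).det * key

lemma charpoly_diagonal (d : m → ℝ) :
    (Matrix.diagonal d).charpoly = ∏ i, (X - C (d i)) := by
  have h : charmatrix (Matrix.diagonal d) = Matrix.diagonal (fun i => X - C (d i)) := by
    ext i j
    by_cases h : i = j
    · subst h; simp
    · rw [charmatrix_apply_ne _ _ _ h, Matrix.diagonal_apply_ne _ h,
        Matrix.diagonal_apply_ne _ h, map_zero, neg_zero]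
  rw [Matrix.charpoly, h, Matrix.det_diagonal]

noncomputable def Qmat (b : ℕ) [NeZero b] : Matrix (Fin b) (Fin b) ℝ :=
  Matrix.of fun k' k => if k = 0 then 1 else if k' = 0 then 1 else if k' = k then -1 else 0

noncomputable def Qinv (b : ℕ) [NeZero b] : Matrix (Fin b) (Fin b) ℝ :=
  Matrix.of fun k m => if k = 0 then (b : ℝ)⁻¹ else (b : ℝ)⁻¹ - if k = m then 1 else 0

noncomputable def Wmat : Matrix (Fin 2) (Fin 2) ℝ :=
  Matrix.of fun j i => if i = 0 then 1 else if j = 0 then 1 else -1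

noncomputable def Winv : Matrix (Fin 2) (Fin 2) ℝ :=
  Matrix.of fun i m => if i = 0 then 1/2 else if m = 0 then 1/2 else -1/2

lemma Wmat_mul_Winv : Wmat * Winv = 1 := by
  ext i j
  fin_cases i <;> fin_cases j <;>
    simp [Wmat, Winv, Matrix.mul_apply, Fin.sum_univ_two, Matrix.one_apply] <;> norm_num

lemma Qmat_mul_Qinv (b : ℕ) [NeZero b] : Qmat b * Qinv b = 1 := by
  have hb : (b : ℝ) ≠ 0 := Nat.cast_ne_zero.mpr (NeZero.ne b)
  ext k m
  rw [Matrix.mul_apply]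
  by_cases hk : k = 0
  · subst hk
    by_cases hm : m = 0
    · subst hm
      have h1 : ∀ k'' : Fin b, Qmat b 0 k'' * Qinv b k'' 0 = (b : ℝ)⁻¹ := by
        intro k''
        by_cases h : k'' = 0 <;> simp [Qmat, Qinv, h]
      rw [Finset.sum_congr rfl fun k'' _ => h1 k'']
      simp [Matrix.one_apply, Finset.card_univ, hb]
    · have h1 : ∀ k'' : Fin b, Qmat b 0 k'' * Qinv b k'' m
          = (b : ℝ)⁻¹ - (if k'' = m then 1 else 0) := by
        intro k''
        by_cases h : k'' = 0
        · subst h; simp [Qmat, Qinv, Ne.symm hm]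
        · simp [Qmat, Qinv, h]
      rw [Finset.sum_congr rfl fun k'' _ => h1 k'', Finset.sum_sub_distrib,
        Finset.sum_const, Finset.sum_ite_eq']
      simp [Matrix.one_apply, Ne.symm hm, Finset.card_univ, hb]
  · have h1 : ∀ k'' : Fin b, Qmat b k k'' * Qinv b k'' m
        = (if k'' = (0:Fin b) then Qinv b k'' m else 0)
          + (if k'' = k then -(Qinv b k'' m) else 0) := by
      intro k''
      by_cases h0 : k'' = 0
      · subst h0
        simp [Qmat, Ne.symm hk, hk]
      · by_cases h2 : k'' = k
        · subst h2; simp [Qmat, h0, hk]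
        · simp [Qmat, h0, hk, Ne.symm h2, h2]
    rw [Finset.sum_congr rfl fun k'' _ => h1 k'', Finset.sum_add_distrib,
      Finset.sum_ite_eq', Finset.sum_ite_eq']
    by_cases hkm : k = m
    · subst hkm; simp [Qinv, hk, Matrix.one_apply]
    · simp [Qinv, hk, hkm, Matrix.one_apply]

lemma Qmat_colsum (b : ℕ) [NeZero b] (k : Fin b) :
    (∑ k'' : Fin b, Qmat b k'' k) = if k = 0 then (b : ℝ) else 0 := by
  by_cases hk : k = 0
  · subst hk
    have h1 : ∀ k'' : Fin b, Qmat b k'' 0 = 1 := fun k'' => by simp [Qmat]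
    rw [Finset.sum_congr rfl fun k'' _ => h1 k'']
    simp [Finset.card_univ]
  · have h1 : ∀ k'' : Fin b, Qmat b k'' k
        = (if k'' = (0:Fin b) then 1 else 0) + (if k'' = k then -1 else 0) := by
      intro k''
      by_cases h0 : k'' = 0
      · subst h0; simp [Qmat, hk, Ne.symm hk]
      · by_cases h2 : k'' = k
        · subst h2; simp [Qmat, hk, h0]
        · simp [Qmat, hk, h0, h2]
    rw [Finset.sum_congr rfl fun k'' _ => h1 k'', Finset.sum_add_distrib,
      Finset.sum_ite_eq', Finset.sum_ite_eq']
    simp [hk]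

lemma sum_ite_mul_Qmat (b : ℕ) [NeZero b] (c e : ℝ) (k' k : Fin b) :
    (∑ k'' : Fin b, (if k' = k'' then c else e) * Qmat b k'' k)
      = e * (if k = 0 then (b : ℝ) else 0) + (c - e) * Qmat b k' k := by
  have h1 : ∀ k'' : Fin b, (if k' = k'' then c else e) * Qmat b k'' k
      = e * Qmat b k'' k + (if k'' = k' then (c - e) * Qmat b k'' k else 0) := by
    intro k''
    by_cases h : k'' = k'
    · subst h; rw [if_pos rfl, if_pos rfl]; ring
    · rw [if_neg (fun hh => h hh.symm), if_neg h]; ring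
  rw [Finset.sum_congr rfl fun k'' _ => h1 k'', Finset.sum_add_distrib, ← Finset.mul_sum,
    Qmat_colsum, Finset.sum_ite_eq']
  simp

end CharAux

/-- Let `n ≥ 3`, `b ≥ 2`, and let `RB` be the principal submatrix of `R(T_n^(b))` on
the `2b` base vertices (indexed by `Fin b × Fin 2`, i.e. block and base index). Then
its characteristic polynomial is
`(x + (n-2)(n-6)b) * (x - (n-2)(n-6)b)^b * (x - (n-2)(n-4)b)^(b-1)`. -/
theorem charpoly_R_base (n b : ℕ) (hn : 3 ≤ n) (hb : 2 ≤ b)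
    (RB : Matrix (Fin b × Fin 2) (Fin b × Fin 2) ℝ)
    (hRB : ∀ (k k' : Fin b) (i j : Fin 2),
      RB (k, i) (k', j) =
        if k = k' then
          (if i = j then ((n : ℝ) - 5) * ((n : ℝ) - 2) * ((b : ℝ) - 1)
           else ((n : ℝ) - 2) * ((b : ℝ) - (n : ℝ) + 5))
        else -(((n : ℝ) - 5) * ((n : ℝ) - 2))) :
    RB.charpoly =
      (X + C (((n : ℝ) - 2) * ((n : ℝ) - 6) * (b : ℝ)))
        * (X - C (((n : ℝ) - 2) * ((n : ℝ) - 6) * (b : ℝ))) ^ b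
        * (X - C (((n : ℝ) - 2) * ((n : ℝ) - 4) * (b : ℝ))) ^ (b - 1) := by
  haveI : NeZero b := ⟨by omega⟩
  set ν : ℝ := ((n : ℝ) - 2) * ((n : ℝ) - 6) * (b : ℝ) with hν
  set μ : ℝ := ((n : ℝ) - 2) * ((n : ℝ) - 4) * (b : ℝ) with hμ
  set α : ℝ := ((n : ℝ) - 5) * ((n : ℝ) - 2) * ((b : ℝ) - 1) with hα
  set β : ℝ := ((n : ℝ) - 2) * ((b : ℝ) - (n : ℝ) + 5) with hβ
  set γ : ℝ := -(((n : ℝ) - 5) * ((n : ℝ) - 2)) with hγ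
  set d : Fin b × Fin 2 → ℝ :=
    fun p => if p.2 = 1 then ν else if p.1 = 0 then -ν else μ with hd
  have hP : (Matrix.kroneckerMap (· * ·) (CharAux.Qmat b) CharAux.Wmat)
      * (Matrix.kroneckerMap (· * ·) (CharAux.Qinv b) CharAux.Winv) = 1 := by
    rw [← Matrix.mul_kronecker_mul, CharAux.Qmat_mul_Qinv, CharAux.Wmat_mul_Winv,
      Matrix.one_kronecker_one]
  have hsim : RB * Matrix.kroneckerMap (· * ·) (CharAux.Qmat b) CharAux.Wmat
      = Matrix.kroneckerMap (· * ·) (CharAux.Qmat b) CharAux.Wmat * Matrix.diagonal d := by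
    ext p q
    obtain ⟨k', j⟩ := p
    obtain ⟨k, i⟩ := q
    rw [Matrix.mul_diagonal, Matrix.mul_apply, Fintype.sum_prod_type]
    simp only [Fin.sum_univ_two, Matrix.kroneckerMap_apply, hRB]
    have hstep : ∀ x : Fin b,
        (if k' = x then if j = 0 then α else β else γ)
            * (CharAux.Qmat b x k * CharAux.Wmat 0 i)
          + (if k' = x then if j = 1 then α else β else γ)
            * (CharAux.Qmat b x k * CharAux.Wmat 1 i)
        = (if k' = x then
             ((if j = 0 then α else β) * CharAux.Wmat 0 i
               + (if j = 1 then α else β) * CharAux.Wmat 1 i)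
           else γ * (CharAux.Wmat 0 i + CharAux.Wmat 1 i)) * CharAux.Qmat b x k := by
      intro x
      by_cases h : k' = x
      · rw [if_pos h, if_pos h, if_pos h]; ring
      · rw [if_neg h, if_neg h, if_neg h]; ring
    rw [Finset.sum_congr rfl fun x _ => hstep x, CharAux.sum_ite_mul_Qmat]
    have hQ0 : CharAux.Qmat b k' 0 = 1 := by simp [CharAux.Qmat]
    fin_cases j <;> fin_cases i <;> by_cases hk : k = 0 <;>
      simp [hk, hQ0, CharAux.Wmat, hd, hν, hμ, hα, hβ, hγ] <;> ring
  have hchar : RB.charpoly = (Matrix.diagonal d).charpoly :=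
    CharAux.charpoly_similar _ _ _ _ hP hsim
  rw [hchar, CharAux.charpoly_diagonal, Fintype.prod_prod_type]
  have hinner : ∀ k : Fin b,
      (∏ i : Fin 2, (X - C (d (k, i))))
        = (X - C (if k = 0 then -ν else μ)) * (X - C ν) := by
    intro k
    rw [Fin.prod_univ_two]
    simp [hd]
  rw [Finset.prod_congr rfl fun k _ => hinner k, Finset.prod_mul_distrib,
    Finset.prod_const, Finset.card_univ, Fintype.card_fin,
    ← Finset.mul_prod_erase Finset.univ _ (Finset.mem_univ (0 : Fin b)),
    if_pos rfl,
    Finset.prod_congr rfl fun k hk => by rw [if_neg (Finset.ne_of_mem_erase hk)],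
    Finset.prod_const, Finset.card_erase_of_mem (Finset.mem_univ _),
    Finset.card_univ, Fintype.card_fin, map_neg, sub_neg_eq_add]
  ring
end

section
/- Let n ≥ 4 and b ≥ 2 be integers, and let R[N] be the principal submatrix of R(T_n^{(b)}) on the (n-3)b non-base vertices (excluding the cut vertex). Then the characteristic polynomial of R[N] equals (x + (n-4)(n-6)b) · (x - (2n-9)b)^{b-1} · (x - (n-6)b)^{(n-4)b}; equivalently, the eigenvalues of R[N] are -(n-4)(n-6)b with multiplicity 1, (2n-9)b with multiplicity b-1, and (n-6)b with multiplicity (n-4)b. -/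
open Polynomial Matrix Kronecker

namespace CharpolyAux

variable (s : ℕ) [NeZero s]

def Emat : Matrix (Fin s) (Fin s) ℝ := Matrix.of fun i j => if j = 0 ∧ i ≠ 0 then 1 else 0
def Qmat : Matrix (Fin s) (Fin s) ℝ := 1 + Emat s
def Qinv : Matrix (Fin s) (Fin s) ℝ := 1 - Emat s
def Jmat : Matrix (Fin s) (Fin s) ℝ := Matrix.of fun _ _ => 1
def Tmat : Matrix (Fin s) (Fin s) ℝ :=
  Matrix.of fun i j => if i = 0 then (if j = 0 then (s : ℝ) else 1) else 0

lemma Emat_mul_Emat : Emat s * Emat s = 0 := by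
  ext i j
  rw [Matrix.mul_apply]
  refine (Finset.sum_eq_zero ?_).trans (Matrix.zero_apply i j).symm
  intro k _
  by_cases h : k = 0 <;> simp [Emat, h]

lemma Qinv_mul_Qmat : Qinv s * Qmat s = 1 := by
  have h := Emat_mul_Emat s
  rw [Qinv, Qmat, sub_mul, mul_add, mul_add, one_mul, one_mul, mul_one, h]
  abel

lemma Qmat_apply_zero (i : Fin s) : Qmat s i 0 = 1 := by
  by_cases hi : i = 0 <;> simp [Qmat, Emat, Matrix.one_apply, hi]

lemma Jmat_mul_Qmat : Jmat s * Qmat s = Qmat s * Tmat s := by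
  ext i j
  rw [Matrix.mul_apply, Matrix.mul_apply]
  have hR : ∀ k : Fin s, Qmat s i k * Tmat s k j
      = if k = 0 then Qmat s i k * (if j = 0 then (s : ℝ) else 1) else 0 := by
    intro k
    by_cases hk : k = 0 <;> simp [Tmat, hk]
  rw [Finset.sum_congr rfl fun k _ => hR k, Finset.sum_ite_eq' Finset.univ (0 : Fin s)]
  simp only [Finset.mem_univ, if_true, Qmat_apply_zero, one_mul]
  by_cases hj : j = 0
  · subst hj
    have hL : ∀ k : Fin s, Jmat s i k * Qmat s k 0 = 1 := by
      intro k; simp [Jmat, Qmat_apply_zero]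
    rw [Finset.sum_congr rfl fun k _ => hL k]
    simp
  · have hL : ∀ k : Fin s, Jmat s i k * Qmat s k j = if k = j then 1 else 0 := by
      intro k
      by_cases hk : k = j <;> simp [Jmat, Qmat, Emat, Matrix.one_apply, hk, hj]
    rw [Finset.sum_congr rfl fun k _ => hL k, Finset.sum_ite_eq' Finset.univ j]
    simp [hj]

/-- Similar matrices have the same characteristic polynomial. -/
lemma charpoly_eq_of_conj {ι : Type*} [Fintype ι] [DecidableEq ι]
    (A D P Pinv : Matrix ι ι ℝ) (hPP : Pinv * P = 1) (hAP : A * P = P * D) :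
    A.charpoly = D.charpoly := by
  have hdetP : P.det ≠ 0 := by
    intro h
    have := congrArg Matrix.det hPP
    rw [Matrix.det_mul, h, mul_zero, Matrix.det_one] at this
    exact zero_ne_one this
  have hchar : ∀ M : Matrix ι ι ℝ,
      charmatrix M = Matrix.diagonal (fun _ => (X : ℝ[X])) - M.map C := by
    intro M
    ext i j
    rw [charmatrix_apply]
    simp [Matrix.sub_apply, Matrix.map_apply]
  have hkey : charmatrix A * P.map C = P.map C * charmatrix D := by
    rw [hchar, hchar, sub_mul, mul_sub]
    congr 1
    · ext i j
      rw [Matrix.diagonal_mul, Matrix.mul_diagonal, mul_comm]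
    · rw [← Matrix.map_mul (f := (C : ℝ →+* ℝ[X])), hAP,
        Matrix.map_mul (f := (C : ℝ →+* ℝ[X]))]
  have hdet : A.charpoly * (P.map C).det = (P.map C).det * D.charpoly := by
    rw [Matrix.charpoly, Matrix.charpoly, ← Matrix.det_mul, hkey, Matrix.det_mul]
  have hPC : (P.map C).det = C P.det := by
    rw [(C : ℝ →+* ℝ[X]).map_det]
    rfl
  rw [hPC] at hdet
  have hCne : (C P.det : ℝ[X]) ≠ 0 := by
    simpa using hdetP
  rw [mul_comm (C P.det) D.charpoly] at hdet
  exact mul_right_cancel₀ hCne hdet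

end CharpolyAux

open CharpolyAux in
/-- Let `n ≥ 4`, `b ≥ 2`, and let `RN` be the principal submatrix of `R(T_n^(b))` on
the `(n-3)b` non-base vertices, excluding the cut vertex (indexed by
`Fin b × Fin (n-3)`, i.e. block and non-base index). Then its characteristic
polynomial is `(x + (n-4)(n-6)b) * (x - (2n-9)b)^(b-1) * (x - (n-6)b)^((n-4)b)`. -/
theorem charpoly_R_nonbase (n b : ℕ) (hn : 4 ≤ n) (hb : 2 ≤ b)
    (RN : Matrix (Fin b × Fin (n - 3)) (Fin b × Fin (n - 3)) ℝ)
    (hRN : ∀ (k k' : Fin b) (i j : Fin (n - 3)),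
      RN (k, i) (k', j) =
        if k = k' then
          (if i = j then (b : ℝ) * ((n : ℝ) - 6) + ((b : ℝ) - (n : ℝ) + 5)
           else (b : ℝ) - (n : ℝ) + 5)
        else -((n : ℝ) - 5)) :
    RN.charpoly =
      (X + C (((n : ℝ) - 4) * ((n : ℝ) - 6) * (b : ℝ)))
        * (X - C ((2 * (n : ℝ) - 9) * (b : ℝ))) ^ (b - 1)
        * (X - C (((n : ℝ) - 6) * (b : ℝ))) ^ ((n - 4) * b) := by
  have hbm : NeZero b := ⟨by omega⟩
  have hmm : NeZero (n - 3) := ⟨by omega⟩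
  have hmr : ((n - 3 : ℕ) : ℝ) = (n : ℝ) - 3 := by
    rw [Nat.cast_sub (by omega)]; norm_num
  set α : ℝ := (b : ℝ) * ((n : ℝ) - 6) with hα
  set B : Matrix (Fin b) (Fin b) ℝ := (b : ℝ) • 1 + (5 - (n : ℝ)) • Jmat b with hB
  set B' : Matrix (Fin b) (Fin b) ℝ := (b : ℝ) • 1 + (5 - (n : ℝ)) • Tmat b with hB'
  set D : Matrix (Fin b × Fin (n - 3)) (Fin b × Fin (n - 3)) ℝ := α • 1 + B' ⊗ₖ Tmat (n - 3) with hD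
  set P : Matrix (Fin b × Fin (n - 3)) (Fin b × Fin (n - 3)) ℝ := Qmat b ⊗ₖ Qmat (n - 3) with hP
  set Pi : Matrix (Fin b × Fin (n - 3)) (Fin b × Fin (n - 3)) ℝ := Qinv b ⊗ₖ Qinv (n - 3) with hPi
  -- RN in structured form
  have hRN' : RN = α • (1 : Matrix (Fin b × Fin (n - 3)) (Fin b × Fin (n - 3)) ℝ) + B ⊗ₖ Jmat (n - 3) := by
    ext ⟨k, i⟩ ⟨k', j⟩
    rw [hRN]
    by_cases hk : k = k' <;> by_cases hi : i = j <;>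
      simp [hB, Jmat, Matrix.kroneckerMap_apply, Matrix.one_apply, Prod.ext_iff, hk, hi,
        Matrix.smul_apply, Matrix.add_apply, hα] <;> ring
  have hPP : Pi * P = 1 := by
    rw [hP, hPi, ← Matrix.mul_kronecker_mul, Qinv_mul_Qmat, Qinv_mul_Qmat,
      Matrix.one_kronecker_one]
  have hBQ : B * Qmat b = Qmat b * B' := by
    rw [hB, hB', add_mul, mul_add, smul_mul_assoc, smul_mul_assoc, one_mul,
      Matrix.mul_smul, Matrix.mul_smul, mul_one, Jmat_mul_Qmat]
  have hAP : RN * P = P * D := by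
    rw [hRN', hD, hP, add_mul, mul_add, smul_mul_assoc, one_mul, Matrix.mul_smul, mul_one,
      ← Matrix.mul_kronecker_mul, hBQ, Jmat_mul_Qmat, Matrix.mul_kronecker_mul]
  have hsim : RN.charpoly = D.charpoly := charpoly_eq_of_conj RN D P Pi hPP hAP
  -- entry formula for D
  have hDapp : ∀ (k k' : Fin b) (i j : Fin (n - 3)), D (k, i) (k', j) =
      (if (k, i) = (k', j) then α else 0) +
        ((b : ℝ) * (if k = k' then 1 else 0) +
            (5 - (n : ℝ)) * (if k = 0 then (if k' = 0 then (b : ℝ) else 1) else 0)) *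
          (if i = 0 then (if j = 0 then ((n - 3 : ℕ) : ℝ) else 1) else 0) := by
    intro k k' i j
    rw [hD]
    simp only [Matrix.add_apply, Matrix.smul_apply, Matrix.kroneckerMap_apply, hB',
      Matrix.one_apply, Tmat, Matrix.add_apply, Matrix.smul_apply, Matrix.of_apply,
      smul_eq_mul, mul_ite, mul_one, mul_zero]
  -- D is upper triangular for the lex order
  have hDtri : ∀ p q : Fin b × Fin (n - 3),
      ((q.2 : ℕ) + (n - 3) * (q.1 : ℕ) < (p.2 : ℕ) + (n - 3) * (p.1 : ℕ)) → D p q = 0 := by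
    rintro ⟨k, i⟩ ⟨k', j⟩ hlt
    have hne : (k, i) ≠ (k', j) := by
      intro h; rw [h] at hlt; exact lt_irrefl _ hlt
    rw [hDapp, if_neg hne, zero_add]
    by_cases hi : i = 0
    · have hj := j.isLt
      have hi0 : (i : ℕ) = 0 := by rw [hi]; rfl
      by_cases hk0 : k = 0
      · exfalso
        have hk00 : (k : ℕ) = 0 := by rw [hk0]; rfl
        simp only [hi0, hk00] at hlt; omega
      · by_cases hkk : k = k'
        · exfalso
          subst hkk
          simp only [hi0] at hlt; omega
        · rw [if_neg hkk, if_neg hk0]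
          ring
    · rw [if_neg hi, mul_zero]
  -- reindex to `Fin (b * (n-3))`
  set e : Fin b × Fin (n - 3) ≃ Fin (b * (n - 3)) := finProdFinEquiv with he
  have hval : ∀ x : Fin (b * (n - 3)),
      ((e.symm x).2 : ℕ) + (n - 3) * ((e.symm x).1 : ℕ) = (x : ℕ) := by
    intro x
    conv_rhs => rw [← e.apply_symm_apply x]
    rw [he]
    simp [finProdFinEquiv]
  have hDtri' : (Matrix.reindex e e D).BlockTriangular id := by
    intro a c hlt
    show D (e.symm a) (e.symm c) = 0
    apply hDtri
    rw [hval, hval]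
    exact hlt
  have hDchar : D.charpoly = ∏ p : Fin b × Fin (n - 3), (X - C (D p p)) := by
    rw [← Matrix.charpoly_reindex e D, Matrix.charpoly_of_upperTriangular _ hDtri',
      ← Equiv.prod_comp e]
    refine Finset.prod_congr rfl fun p _ => ?_
    simp
  -- diagonal values
  set v0 : ℝ := α + ((b : ℝ) + (5 - (n : ℝ)) * (b : ℝ)) * ((n : ℝ) - 3) with hv0
  set v1 : ℝ := α + (b : ℝ) * ((n : ℝ) - 3) with hv1
  have hdiag : ∀ (k : Fin b) (i : Fin (n - 3)),
      D (k, i) (k, i) = if i = 0 then (if k = 0 then v0 else v1) else α := by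
    intro k i
    rw [hDapp, if_pos rfl]
    by_cases hi : i = 0 <;> by_cases hk : k = 0 <;>
      simp [hi, hk, hv0, hv1, hmr] <;> ring
  have hprod : ∏ p : Fin b × Fin (n - 3), (X - C (D p p)) =
      ((X - C v0) * (X - C v1) ^ (b - 1)) * (X - C α) ^ ((n - 4) * b) := by
    rw [Fintype.prod_prod_type]
    have hinner : ∀ k : Fin b, (∏ i : Fin (n - 3), (X - C (D (k, i) (k, i)))) =
        (X - C (if k = 0 then v0 else v1)) * (X - C α) ^ (n - 4) := by
      intro k
      rw [← Finset.mul_prod_erase Finset.univ _ (Finset.mem_univ (0 : Fin (n - 3)))]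
      congr 1
      · rw [hdiag, if_pos rfl]
      · rw [Finset.prod_congr rfl (fun i hi => by
          rw [hdiag, if_neg (Finset.ne_of_mem_erase hi)]),
          Finset.prod_const, Finset.card_erase_of_mem (Finset.mem_univ _),
          Finset.card_univ, Fintype.card_fin]
        congr 1
    rw [Finset.prod_congr rfl fun k _ => hinner k, Finset.prod_mul_distrib,
      Finset.prod_const, Finset.card_univ, Fintype.card_fin, ← pow_mul]
    congr 1
    rw [← Finset.mul_prod_erase Finset.univ _ (Finset.mem_univ (0 : Fin b)), if_pos rfl]
    congr 1
    rw [Finset.prod_congr rfl (fun k hk => by rw [if_neg (Finset.ne_of_mem_erase hk)]),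
      Finset.prod_const, Finset.card_erase_of_mem (Finset.mem_univ _),
      Finset.card_univ, Fintype.card_fin]
  rw [hsim, hDchar, hprod]
  have e0 : v0 = -(((n : ℝ) - 4) * ((n : ℝ) - 6) * (b : ℝ)) := by rw [hv0, hα]; ring
  have e1 : v1 = (2 * (n : ℝ) - 9) * (b : ℝ) := by rw [hv1, hα]; ring
  have e2 : α = ((n : ℝ) - 6) * (b : ℝ) := by rw [hα]; ring
  rw [e0, e1, e2, map_neg, sub_neg_eq_add]
end

section
/- Let n ≥ 4 and b ≥ 2 be integers, and let R[N ∪ {c}] be the principal submatrix of R(T_n^{(b)}) on the (n-3)b non-base vertices together with the cut vertex c. Then the characteristic polynomial of R[N ∪ {c}] equals (x - (2n-9)b)^{b-1} · (x - (n-6)b)^{(n-4)b} · p(x), where p(x) = x^2 + (n-6)·[(n-5)(b-1)^2 + (n-4)b]·x + b(n-6)^2·[(n-4)(n-5)(b-1)^2 - (n-3)b^2]. -/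
/-!
On the non-base vertices the matrix is `a • I + p • (I_b ⊗ J_m) + q • J` with `a = b(n-6)`,
`p = b`, `q = -(n-5)`, `m = n-3`; the cut vertex contributes a constant column `β`, a constant
row `γ` and a corner entry `δ`. For all but finitely many `x`, the Schur complement of the corner
of `x • I - R` has the same shape, with `q` shifted by `β γ / (x - δ)`. The all-ones vector is an
eigenvector of `a • I + p • (I_b ⊗ J_m)` (eigenvalue `a + m p`), so the matrix determinant lemma
evaluates the rank-one perturbation by `q • J`. Both sides of the identity are then polynomials
agreeing at infinitely many points.
-/

open Polynomial Matrix Kronecker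

namespace Matrix

variable {K : Type*} [Field K] {m : Type*} [Fintype m] [DecidableEq m]

theorem det_add_const_of_mulVec_one {A : Matrix m m K} (hA : IsUnit A.det) {s : K} (hs : s ≠ 0)
    (hA1 : A *ᵥ 1 = s • 1) (q : K) :
    (A + of fun _ _ => q).det = A.det * (1 + Fintype.card m * q / s) := by
  have hconst : (of fun _ _ => q : Matrix m m K) =
      (of fun _ _ => q : Matrix m Unit K) * (of fun _ _ => 1 : Matrix Unit m K) := by
    ext i j; simp [mul_apply]
  have hinv : A⁻¹ *ᵥ 1 = s⁻¹ • 1 := by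
    rw [← inv_smul_smul₀ hs (A⁻¹ *ᵥ 1), ← mulVec_smul, ← hA1, mulVec_mulVec,
      nonsing_inv_mul _ hA, one_mulVec]
  have hrow (i : m) : ∑ j, A⁻¹ i j = s⁻¹ := by
    simpa [mulVec, dotProduct] using congrFun hinv i
  rw [hconst, det_add_mul _ _ hA, det_unique (n := Unit)]
  simp only [add_apply, one_apply_eq, mul_apply, of_apply, one_mul, ← Finset.sum_mul]
  rw [Finset.sum_comm]
  congr 1
  simp [hrow, div_eq_mul_inv]
  ring

theorem det_smul_one_add_const [Nonempty m] {a : K} (ha : a ≠ 0) (q : K) :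
    (a • (1 : Matrix m m K) + of fun _ _ => q).det =
      a ^ (Fintype.card m - 1) * (a + Fintype.card m * q) := by
  obtain ⟨N, hN⟩ := Nat.exists_eq_add_one.2 (Fintype.card_pos (α := m))
  rw [det_add_const_of_mulVec_one (by simp [ha]) ha (by rw [smul_mulVec, one_mulVec]), det_smul,
    det_one, mul_one, hN, Nat.add_sub_cancel]
  field_simp
  ring

variable {ι κ : Type*} [Fintype ι] [DecidableEq ι] [Fintype κ] [DecidableEq κ]

theorem det_smul_one_add_one_kronecker_add_const [Nonempty ι] [Nonempty κ] {a p : K}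
    (ha : a ≠ 0) (hap : a + Fintype.card κ * p ≠ 0) (q : K) :
    (a • 1 + (1 : Matrix ι ι K) ⊗ₖ (of fun _ _ => p : Matrix κ κ K) + of fun _ _ => q).det =
      a ^ ((Fintype.card κ - 1) * Fintype.card ι) * (a + Fintype.card κ * p) ^ (Fintype.card ι - 1)
        * (a + Fintype.card κ * p + Fintype.card ι * Fintype.card κ * q) := by
  set A := a • 1 + (1 : Matrix ι ι K) ⊗ₖ (of fun _ _ => p : Matrix κ κ K)
  have hdet : A.det = (a ^ (Fintype.card κ - 1) * (a + Fintype.card κ * p)) ^ Fintype.card ι := by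
    rw [show A = 1 ⊗ₖ (a • 1 + of fun _ _ => p) by
        rw [kronecker_add, kronecker_smul, one_kronecker_one],
      det_kronecker, det_one, one_pow, one_mul, det_smul_one_add_const ha]
  have hA1 : A *ᵥ 1 = (a + Fintype.card κ * p) • 1 := by
    ext x
    rw [add_mulVec, smul_mulVec, one_mulVec]
    simp only [Pi.add_apply, Pi.smul_apply, add_smul, add_right_inj]
    simp [mulVec, dotProduct, Fintype.sum_prod_type, one_apply]
    rw [Finset.sum_comm]
    simp
  obtain ⟨N, hN⟩ := Nat.exists_eq_add_one.2 (Fintype.card_pos (α := ι))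
  rw [det_add_const_of_mulVec_one (by rw [hdet]; simp [ha, hap]) hap hA1, hdet, Fintype.card_prod,
    hN, mul_pow, ← pow_mul, Nat.add_sub_cancel]
  field_simp
  push_cast
  ring

theorem det_fromBlocks_const₂₂ (A : Matrix m m K) (β γ : K) {δ : K} (hδ : δ ≠ 0) :
    (fromBlocks A (of fun _ _ => β) (of fun _ _ => γ) (of fun _ _ => δ) :
      Matrix (m ⊕ Unit) (m ⊕ Unit) K).det = δ * (A - of fun _ _ => β * γ / δ).det := by
  let _ : Invertible (of fun _ _ => δ : Matrix Unit Unit K) :=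
    ⟨of fun _ _ => δ⁻¹, by ext; simp [mul_apply, hδ], by ext; simp [mul_apply, hδ]⟩
  rw [det_fromBlocks₂₂, det_unique]
  congr 2
  ext i j
  simp [mul_apply, div_eq_mul_inv]
  ring

theorem charpoly_fromBlocks_kronecker_const [Infinite K] [Nonempty ι] [Nonempty κ]
    (a p q β γ δ : K) :
    (fromBlocks (a • 1 + (1 : Matrix ι ι K) ⊗ₖ (of fun _ _ => p : Matrix κ κ K)
        + of fun _ _ => q) (of fun _ _ => β) (of fun _ _ => γ) (of fun _ _ => δ) :
      Matrix ((ι × κ) ⊕ Unit) ((ι × κ) ⊕ Unit) K).charpoly =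
      (X - C (a + Fintype.card κ * p)) ^ (Fintype.card ι - 1)
        * (X - C a) ^ ((Fintype.card κ - 1) * Fintype.card ι)
        * ((X - C (a + Fintype.card κ * p + Fintype.card ι * Fintype.card κ * q)) * (X - C δ)
          - C (β * γ * (Fintype.card ι * Fintype.card κ))) := by
  apply eq_of_infinite_eval_eq
  refine Set.Infinite.mono (s := {δ, a, a + Fintype.card κ * p}ᶜ) ?_
    (Set.toFinite _).infinite_compl
  intro x hx
  simp only [Set.mem_compl_iff, Set.mem_insert_iff, Set.mem_singleton_iff, not_or] at hx
  obtain ⟨hxδ, hxa, hxs⟩ := hx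
  have hcharmat : scalar ((ι × κ) ⊕ Unit) x
      - fromBlocks (a • 1 + (1 : Matrix ι ι K) ⊗ₖ (of fun _ _ => p : Matrix κ κ K)
        + of fun _ _ => q) (of fun _ _ => β) (of fun _ _ => γ) (of fun _ _ => δ) =
      fromBlocks ((x - a) • 1 + (1 : Matrix ι ι K) ⊗ₖ (of fun _ _ => -p : Matrix κ κ K)
        + of fun _ _ => -q) (of fun _ _ => -β) (of fun _ _ => -γ) (of fun _ _ => x - δ) := by
    ext (⟨i, k⟩ | _) (⟨j, l⟩ | _)
    · simp only [fromBlocks_apply₁₁, sub_apply, add_apply, smul_apply, scalar_apply,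
        diagonal_apply, one_apply, kroneckerMap_apply, of_apply]
      split_ifs <;> simp_all <;> ring
    all_goals simp
  have hschur : (x - a) • 1 + (1 : Matrix ι ι K) ⊗ₖ (of fun _ _ => -p : Matrix κ κ K)
        + (of fun _ _ => -q) - (of fun _ _ => -β * -γ / (x - δ)) =
      (x - a) • 1 + (1 : Matrix ι ι K) ⊗ₖ (of fun _ _ => -p : Matrix κ κ K)
        + of fun _ _ => -q - β * γ / (x - δ) := by
    rw [add_sub_assoc]
    congr 1
    ext
    simp [sub_eq_add_neg]
  have hxs' : x - a + Fintype.card κ * -p ≠ 0 := by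
    contrapose! hxs
    linear_combination hxs
  rw [Set.mem_ofPred_eq, eval_charpoly, hcharmat, det_fromBlocks_const₂₂ _ _ _ (sub_ne_zero.2 hxδ),
    hschur, det_smul_one_add_one_kronecker_add_const (sub_ne_zero.2 hxa) hxs']
  simp only [eval_mul, eval_pow, eval_sub, eval_X, eval_C]
  field_simp
  ring

end Matrix

/-- Let `n ≥ 4`, `b ≥ 2`, and let `RNc` be the principal submatrix of `R(T_n^(b))` on
the `(n-3)b` non-base vertices together with the cut vertex `c` (indexed by
`(Fin b × Fin (n-3)) ⊕ Unit`). Then its characteristic polynomial is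
`(x - (2n-9)b)^(b-1) * (x - (n-6)b)^((n-4)b) * p(x)` where
`p(x) = x² + (n-6)[(n-5)(b-1)² + (n-4)b]x + b(n-6)²[(n-4)(n-5)(b-1)² - (n-3)b²]`. -/
theorem charpoly_R_nonbase_cut (n b : ℕ) (hn : 4 ≤ n) (hb : 2 ≤ b)
    (RNc : Matrix ((Fin b × Fin (n - 3)) ⊕ Unit) ((Fin b × Fin (n - 3)) ⊕ Unit) ℝ)
    (hRNc₁ : ∀ (k k' : Fin b) (i j : Fin (n - 3)),
      RNc (Sum.inl (k, i)) (Sum.inl (k', j)) =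
        if k = k' then
          (if i = j then (b : ℝ) * ((n : ℝ) - 6) + ((b : ℝ) - (n : ℝ) + 5)
           else (b : ℝ) - (n : ℝ) + 5)
        else -((n : ℝ) - 5))
    (hRNc₂ : ∀ (k : Fin b) (i : Fin (n - 3)),
      RNc (Sum.inl (k, i)) (Sum.inr ()) = -((b : ℝ) * ((n : ℝ) - 6)))
    (hRNc₃ : ∀ (k : Fin b) (i : Fin (n - 3)),
      RNc (Sum.inr ()) (Sum.inl (k, i)) = -((b : ℝ) * ((n : ℝ) - 6)))
    (hRNc₄ : RNc (Sum.inr ()) (Sum.inr ()) =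
      -(((n : ℝ) - 5) * ((n : ℝ) - 6) * ((b : ℝ) - 1) ^ 2)) :
    RNc.charpoly =
      (X - C ((2 * (n : ℝ) - 9) * (b : ℝ))) ^ (b - 1)
        * (X - C (((n : ℝ) - 6) * (b : ℝ))) ^ ((n - 4) * b)
        * (X ^ 2
            + C (((n : ℝ) - 6) * (((n : ℝ) - 5) * ((b : ℝ) - 1) ^ 2
                + ((n : ℝ) - 4) * (b : ℝ))) * X
            + C ((b : ℝ) * ((n : ℝ) - 6) ^ 2
                * (((n : ℝ) - 4) * ((n : ℝ) - 5) * ((b : ℝ) - 1) ^ 2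
                  - ((n : ℝ) - 3) * (b : ℝ) ^ 2))) := by
  have : Nonempty (Fin b) := ⟨⟨0, by omega⟩⟩
  have : Nonempty (Fin (n - 3)) := ⟨⟨0, by omega⟩⟩
  have hR : RNc = fromBlocks
      (((b : ℝ) * ((n : ℝ) - 6)) • 1
        + (1 : Matrix (Fin b) (Fin b) ℝ) ⊗ₖ (of fun _ _ => (b : ℝ) : Matrix (Fin (n - 3)) _ ℝ)
        + of fun _ _ => -((n : ℝ) - 5))
      (of fun _ _ => -((b : ℝ) * ((n : ℝ) - 6))) (of fun _ _ => -((b : ℝ) * ((n : ℝ) - 6)))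
      (of fun _ _ => -(((n : ℝ) - 5) * ((n : ℝ) - 6) * ((b : ℝ) - 1) ^ 2)) := by
    ext (⟨k, i⟩ | _) (⟨l, j⟩ | _)
    · rw [hRNc₁]
      simp only [fromBlocks_apply₁₁, Matrix.add_apply, Matrix.smul_apply, one_apply,
        kroneckerMap_apply, of_apply, Prod.mk.injEq]
      split_ifs <;> simp_all <;> ring
    · exact hRNc₂ k i
    · exact hRNc₃ l j
    · exact hRNc₄
  have hm : ((n - 3 : ℕ) : ℝ) = (n : ℝ) - 3 := by push_cast [show 3 ≤ n by omega]; ring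
  rw [hR, charpoly_fromBlocks_kronecker_const, Fintype.card_fin, Fintype.card_fin, hm,
    show n - 3 - 1 = n - 4 by omega]
  simp only [C_add, C_sub, C_neg, C_mul, C_pow, map_ofNat, C_1]
  ring
end
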